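/- arXiv:2403.07827 — 10 statements merged into one kernel-verified Lean document; each statement's English description precedes it below -/
import Mathlib

section
/- Let f : C → ℝ be weakly affinely differentiable at every point of the convex set C (i.e. for all x ∈ C, Df(x;·) exists and is affine on C). Then for all x, y ∈ C, the auxiliary function φ(t) = f((1−t)x + ty) is differentiable on [0,1], with φ'(t) = (1/(1−t)) Df(x_t; y) = −(1/t) Df(x_t; x) for t ∈ (0,1), φ'₊(0) = Df(x;y), and φ'₋(1) = −Df(y;x), where x_t = (1−t)x + ty. -/
/-!
With `x_t = (1 - t) • x + t • y`, the points `x_t + u (y - x_t)` and `x_t + u (x - x_t)` are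
`x_{t + (1 - t) u}` and `x_{t - t u}`, so `Df(x_t; y)` and `Df(x_t; x)` are, up to the factors
`1 - t` and `-t`, the right and left derivatives of `φ` at `t`. Since `Df(x_t; x_t) = 0` and
`Df(x_t; ·)` is affine, `(1 - t) Df(x_t; x) + t Df(x_t; y) = 0`, so the one-sided derivatives agree.
-/

open Set Filter Topology

theorem hasDerivWithinAt_Ici_of_tendsto_dilated_slope {g : ℝ → ℝ} {t c L : ℝ} (hc : 0 < c)
    (h : Tendsto (fun u => (g (t + c * u) - g t) / u) (𝓝[>] 0) (𝓝 L)) :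
    HasDerivWithinAt g (c⁻¹ * L) (Ici t) t := by
  have hline : HasDerivWithinAt (fun u => g (t + c * u)) L (Ioi 0) ((t - t) / c) := by
    rw [sub_self, zero_div, hasDerivWithinAt_iff_tendsto_slope,
      sdiff_singleton_eq_self self_notMem_Ioi]
    convert h using 2 with u
    simp [slope_def_field]
  have hrescale : HasDerivWithinAt (fun s => (s - t) / c) c⁻¹ (Ioi t) t := by
    simpa [div_eq_mul_inv] using ((hasDerivAt_id t).sub_const t).div_const c |>.hasDerivWithinAt
  have hcomp := hline.comp t hrescale fun s hs => div_pos (sub_pos.2 hs) hc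
  have hg : (fun u => g (t + c * u)) ∘ (fun s => (s - t) / c) = g := by
    funext s; simp [mul_div_cancel₀ _ hc.ne']
  rw [hg, mul_comm] at hcomp
  exact hasDerivWithinAt_Ioi_iff_Ici.1 hcomp

theorem hasDerivWithinAt_Iic_of_tendsto_dilated_slope {g : ℝ → ℝ} {t c L : ℝ} (hc : 0 < c)
    (h : Tendsto (fun u => (g (t - c * u) - g t) / u) (𝓝[>] 0) (𝓝 L)) :
    HasDerivWithinAt g (-(c⁻¹ * L)) (Iic t) t := by
  have hreflect := hasDerivWithinAt_Ici_of_tendsto_dilated_slope (g := fun s => g (-s)) (t := -t) hc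
    (by simpa [neg_add_eq_sub] using h)
  have := hreflect.comp t (hasDerivWithinAt_neg t (Iic t)) fun s hs => neg_le_neg (mem_Iic.1 hs)
  simpa [Function.comp_def] using this

theorem hasDerivAt_of_hasDerivWithinAt_Iic_of_Ici {g : ℝ → ℝ} {g' t : ℝ}
    (hleft : HasDerivWithinAt g g' (Iic t) t) (hright : HasDerivWithinAt g g' (Ici t) t) :
    HasDerivAt g g' t :=
  (hleft.union hright).hasDerivAt (by simp [Iic_union_Ici])

section

variable {X : Type*} [AddCommGroup X] [Module ℝ X]

theorem eq_zero_of_tendsto_affine_slope_self {f : X → ℝ} {z : X} {L : ℝ}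
    (h : Tendsto (fun t : ℝ => (f ((1 - t) • z + t • z) - f z) / t) (𝓝[>] 0) (𝓝 L)) :
    L = 0 := by
  simp only [← add_smul, sub_add_cancel, one_smul, sub_self, zero_div] at h
  exact tendsto_nhds_unique h tendsto_const_nhds

theorem hasDerivWithinAt_Ici_of_tendsto_affine_slope {f : X → ℝ} {x y : X} {t L : ℝ}
    (ht : t < 1)
    (h : Tendsto (fun u : ℝ => (f ((1 - u) • ((1 - t) • x + t • y) + u • y)
      - f ((1 - t) • x + t • y)) / u) (𝓝[>] 0) (𝓝 L)) :
    HasDerivWithinAt (fun s : ℝ => f ((1 - s) • x + s • y)) ((1 - t)⁻¹ * L) (Ici t) t := by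
  refine hasDerivWithinAt_Ici_of_tendsto_dilated_slope (sub_pos.2 ht) ?_
  convert h using 5 with u
  module

theorem hasDerivWithinAt_Iic_of_tendsto_affine_slope {f : X → ℝ} {x y : X} {t L : ℝ}
    (ht : 0 < t)
    (h : Tendsto (fun u : ℝ => (f ((1 - u) • ((1 - t) • x + t • y) + u • x)
      - f ((1 - t) • x + t • y)) / u) (𝓝[>] 0) (𝓝 L)) :
    HasDerivWithinAt (fun s : ℝ => f ((1 - s) • x + s • y)) (-(t⁻¹ * L)) (Iic t) t := by
  refine hasDerivWithinAt_Iic_of_tendsto_dilated_slope ht ?_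
  convert h using 5 with u
  module

end

/-- a wa-differentiable function is hemidifferentiable, with
`φ'(t) = (1/(1−t)) Df(x_t;y) = −(1/t) Df(x_t;x)` on `(0,1)`, `φ'₊(0) = Df(x;y)`,
and `φ'₋(1) = −Df(y;x)`, where `φ(t) = f((1−t)x + ty)`. -/
theorem stmt_5 {X : Type*} [AddCommGroup X] [Module ℝ X]
    (C : Set X) (hC : Convex ℝ C) (f : X → ℝ) (D : X → X → ℝ)
    (hD : ∀ x ∈ C, ∀ y ∈ C,
      Tendsto (fun t : ℝ => (f ((1 - t) • x + t • y) - f x) / t)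
        (𝓝[>] 0) (𝓝 (D x y)))
    (haff : ∀ x ∈ C, ∀ y ∈ C, ∀ z ∈ C, ∀ t ∈ Set.Icc (0:ℝ) 1,
      D x ((1 - t) • y + t • z) = (1 - t) * D x y + t * D x z)
    (x y : X) (hx : x ∈ C) (hy : y ∈ C) :
    (∀ t ∈ Set.Ioo (0:ℝ) 1,
      HasDerivAt (fun s : ℝ => f ((1 - s) • x + s • y))
        ((1 - t)⁻¹ * D ((1 - t) • x + t • y) y) t ∧
      (1 - t)⁻¹ * D ((1 - t) • x + t • y) y =
        -(t⁻¹ * D ((1 - t) • x + t • y) x)) ∧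
    HasDerivWithinAt (fun s : ℝ => f ((1 - s) • x + s • y)) (D x y) (Set.Ici 0) 0 ∧
    HasDerivWithinAt (fun s : ℝ => f ((1 - s) • x + s • y)) (-(D y x)) (Set.Iic 1) 1 := by
  have hmem : ∀ t ∈ Icc (0:ℝ) 1, (1 - t) • x + t • y ∈ C := fun t ht =>
    hC hx hy (sub_nonneg.2 ht.2) ht.1 (sub_add_cancel 1 t)
  have hright : ∀ t ∈ Ico (0:ℝ) 1, HasDerivWithinAt (fun s : ℝ => f ((1 - s) • x + s • y))
      ((1 - t)⁻¹ * D ((1 - t) • x + t • y) y) (Ici t) t := fun t ht =>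
    hasDerivWithinAt_Ici_of_tendsto_affine_slope ht.2 (hD _ (hmem t ⟨ht.1, ht.2.le⟩) y hy)
  have hleft : ∀ t ∈ Ioc (0:ℝ) 1, HasDerivWithinAt (fun s : ℝ => f ((1 - s) • x + s • y))
      (-(t⁻¹ * D ((1 - t) • x + t • y) x)) (Iic t) t := fun t ht =>
    hasDerivWithinAt_Iic_of_tendsto_affine_slope ht.1 (hD _ (hmem t ⟨ht.1.le, ht.2⟩) x hx)
  refine ⟨fun t ht => ?_, by simpa using hright 0 ⟨le_rfl, one_pos⟩,
    by simpa using hleft 1 ⟨one_pos, le_rfl⟩⟩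
  set a := (1 - t) • x + t • y
  have ha : a ∈ C := hmem t ⟨ht.1.le, ht.2.le⟩
  have hbalance : (1 - t) * D a x + t * D a y = 0 := by
    rw [← haff a ha x hx y hy t ⟨ht.1.le, ht.2.le⟩]
    exact eq_zero_of_tendsto_affine_slope_self (hD a ha a ha)
  have hslopes : (1 - t)⁻¹ * D a y = -(t⁻¹ * D a x) := by
    field_simp [(sub_pos.2 ht.2).ne', ht.1.ne']
    linarith
  refine ⟨hasDerivAt_of_hasDerivWithinAt_Iic_of_Ici ?_ (hright t ⟨ht.1.le, ht.2⟩), hslopes⟩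
  rw [hslopes]
  exact hleft t ⟨ht.1, ht.2.le⟩
end

section
/- Mean value theorem: if f : C → ℝ is wa-differentiable on a convex set C, then for every x, y ∈ C there exists t ∈ (0,1) such that f(y) − f(x) = (1/(1−t)) Df(x_t; y), where x_t = (1−t)x + ty. -/
open Set Filter Topology

/-- Mean value theorem: if `f : C → ℝ` is wa-differentiable on a convex set
`C`, then for all `x, y ∈ C` there is `t ∈ (0,1)` with
`f(y) − f(x) = (1/(1−t)) Df(x_t; y)` where `x_t = (1−t)x + ty`. -/
theorem stmt_6 {X : Type*} [AddCommGroup X] [Module ℝ X]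
    (C : Set X) (hC : Convex ℝ C) (f : X → ℝ) (D : X → X → ℝ)
    (hD : ∀ x ∈ C, ∀ y ∈ C,
      Tendsto (fun t : ℝ => (f ((1 - t) • x + t • y) - f x) / t)
        (𝓝[>] 0) (𝓝 (D x y)))
    (haff : ∀ x ∈ C, ∀ y ∈ C, ∀ z ∈ C, ∀ t ∈ Set.Icc (0:ℝ) 1,
      D x ((1 - t) • y + t • z) = (1 - t) * D x y + t * D x z)
    (x y : X) (hx : x ∈ C) (hy : y ∈ C) :
    ∃ t ∈ Set.Ioo (0:ℝ) 1,
      f y - f x = (1 - t)⁻¹ * D ((1 - t) • x + t • y) y := by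
  set g : ℝ → ℝ := fun t => f ((1 - t) • x + t • y) with hgdef
  have hmem : ∀ t : ℝ, 0 ≤ t → t ≤ 1 → (1 - t) • x + t • y ∈ C := by
    intro t h0 h1
    exact hC hx hy (by linarith) h0 (by ring)
  have hDzero : ∀ z ∈ C, D z z = 0 := by
    intro z hz
    have h1 := hD z hz z hz
    have h2 : Tendsto (fun t : ℝ => (f ((1 - t) • z + t • z) - f z) / t)
        (𝓝[>] (0:ℝ)) (𝓝 0) := by
      have he : (fun t : ℝ => (f ((1 - t) • z + t • z) - f z) / t) = fun _ => (0:ℝ) := by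
        funext t
        have hz' : (1 - t) • z + t • z = z := by module
        simp [hz']
      rw [he]
      exact tendsto_const_nhds
    exact tendsto_nhds_unique h1 h2
  -- right derivative
  have hright : ∀ t : ℝ, 0 ≤ t → t < 1 →
      HasDerivWithinAt g (D ((1 - t) • x + t • y) y * (1 - t)⁻¹) (Ici t) t := by
    intro t h0 h1
    have ht1 : (0:ℝ) < 1 - t := by linarith
    have hxt : (1 - t) • x + t • y ∈ C := hmem t h0 h1.le
    have hQ := hD _ hxt y hy
    have hm : Tendsto (fun s : ℝ => (s - t) / (1 - t)) (𝓝[>] t) (𝓝[>] (0:ℝ)) := by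
      rw [tendsto_nhdsWithin_iff]
      constructor
      · have hc : Continuous fun s : ℝ => (s - t) / (1 - t) := by continuity
        have := hc.tendsto t
        simp only [sub_self, zero_div] at this
        exact this.mono_left nhdsWithin_le_nhds
      · filter_upwards [self_mem_nhdsWithin] with s hs
        exact div_pos (sub_pos.mpr hs) ht1
    have hmul := (hQ.comp hm).mul_const ((1 - t)⁻¹)
    rw [hasDerivWithinAt_iff_tendsto_slope, Ici_sdiff_left]
    refine hmul.congr' ?_
    filter_upwards [self_mem_nhdsWithin] with s hs
    have hst : t < s := hs
    have hst' : s - t ≠ 0 := sub_ne_zero.mpr hst.ne'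
    set u := (s - t) / (1 - t) with hudef
    have hu : u * (1 - t) = s - t := div_mul_cancel₀ _ ht1.ne'
    have harg : (1 - u) • ((1 - t) • x + t • y) + u • y = (1 - s) • x + s • y := by
      match_scalars
      · linear_combination -hu
      · linear_combination hu
    show (f ((1 - u) • ((1 - t) • x + t • y) + u • y) - f ((1 - t) • x + t • y)) / u
        * (1 - t)⁻¹ = slope g t s
    rw [harg, slope_def_field]
    show (g s - g t) / u * (1 - t)⁻¹ = (g s - g t) / (s - t)
    rw [hudef]
    field_simp
  -- left derivative
  have hleft : ∀ t : ℝ, 0 < t → t ≤ 1 →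
      HasDerivWithinAt g (D ((1 - t) • x + t • y) x * (-t⁻¹)) (Iic t) t := by
    intro t h0 h1
    have hxt : (1 - t) • x + t • y ∈ C := hmem t h0.le h1
    have hQ := hD _ hxt x hx
    have hm : Tendsto (fun s : ℝ => (t - s) / t) (𝓝[<] t) (𝓝[>] (0:ℝ)) := by
      rw [tendsto_nhdsWithin_iff]
      constructor
      · have hc : Continuous fun s : ℝ => (t - s) / t := by continuity
        have := hc.tendsto t
        simp only [sub_self, zero_div] at this
        exact this.mono_left nhdsWithin_le_nhds
      · filter_upwards [self_mem_nhdsWithin] with s hs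
        exact div_pos (sub_pos.mpr hs) h0
    have hmul := (hQ.comp hm).mul_const (-t⁻¹)
    rw [hasDerivWithinAt_iff_tendsto_slope, Iic_diff_right]
    refine hmul.congr' ?_
    filter_upwards [self_mem_nhdsWithin] with s hs
    have hst : s < t := hs
    have hst' : t - s ≠ 0 := sub_ne_zero.mpr hst.ne'
    set u := (t - s) / t with hudef
    have hu : u * t = t - s := div_mul_cancel₀ _ h0.ne'
    have harg : (1 - u) • ((1 - t) • x + t • y) + u • x = (1 - s) • x + s • y := by
      match_scalars
      · linear_combination hu
      · linear_combination -hu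
    show (f ((1 - u) • ((1 - t) • x + t • y) + u • x) - f ((1 - t) • x + t • y)) / u
        * (-t⁻¹) = slope g t s
    rw [harg, slope_def_field]
    show (g s - g t) / u * (-t⁻¹) = (g s - g t) / (s - t)
    rw [hudef]
    have hts : s - t ≠ 0 := sub_ne_zero.mpr hst.ne
    field_simp
    ring
  -- two-sided derivative
  have hderiv : ∀ t ∈ Ioo (0:ℝ) 1, HasDerivAt g (D ((1 - t) • x + t • y) y * (1 - t)⁻¹) t := by
    intro t ht
    have hr := hright t ht.1.le ht.2
    have hl := hleft t ht.1 ht.2.le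
    have hxt := hmem t ht.1.le ht.2.le
    have h0 := hDzero _ hxt
    have haff' := haff _ hxt x hx y hy t ⟨ht.1.le, ht.2.le⟩
    have h1 : (1 - t) * D ((1 - t) • x + t • y) x + t * D ((1 - t) • x + t • y) y = 0 := by
      rw [← haff']
      exact h0
    have ht0 : t ≠ 0 := ht.1.ne'
    have ht1 : (1:ℝ) - t ≠ 0 := by intro h; nlinarith [ht.2]
    have hval : D ((1 - t) • x + t • y) x * (-t⁻¹)
        = D ((1 - t) • x + t • y) y * (1 - t)⁻¹ := by
      field_simp
      linear_combination -h1
    rw [hval] at hl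
    have := hl.union hr
    rw [Iic_union_Ici, hasDerivWithinAt_univ] at this
    exact this
  -- continuity on Icc
  have hcont : ContinuousOn g (Icc (0:ℝ) 1) := by
    intro t ht
    rcases eq_or_lt_of_le ht.1 with h0 | h0
    · have h := (hright 0 le_rfl one_pos).continuousWithinAt
      rw [← h0]
      exact h.mono (fun s hs => hs.1)
    rcases eq_or_lt_of_le ht.2 with h1 | h1
    · have h := (hleft 1 one_pos le_rfl).continuousWithinAt
      rw [h1]
      exact h.mono (fun s hs => hs.2)
    · exact ((hderiv t ⟨h0, h1⟩).continuousAt).continuousWithinAt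
  obtain ⟨c, hc, heq⟩ := exists_hasDerivAt_eq_slope g
    (fun t => D ((1 - t) • x + t • y) y * (1 - t)⁻¹) one_pos hcont
    (fun t ht => hderiv t ht)
  refine ⟨c, hc, ?_⟩
  have hg1 : g 1 = f y := by simp [hgdef]
  have hg0 : g 0 = f x := by simp [hgdef]
  rw [hg1, hg0, sub_zero, div_one] at heq
  rw [← heq, mul_comm]
end

section
/- If f : C → ℝ is wa-differentiable and, for each x, y ∈ C, the map t ↦ Df(x_t; y) is continuous on [0,1] and t ↦ Df(x_t; x) is continuous on [0,1] (where x_t = (1−t)x + ty), then f(y) − f(x) = ∫₀¹ (1/(1−t)) Df(x_t; y) dt for all x, y ∈ C. -/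
open Set Filter Topology intervalIntegral

/-! Put `g s = f ((1 - s) • x + s • y)`. For `0 ≤ t < 1` the segment from `x_t` to `y` is an affine
reparametrisation of `[t, 1]`, so `g` has right derivative `Df(x_t; y) / (1 - t)` at `t`; likewise
the segment from `x_t` to `x` gives `g` a left derivative at every `t ∈ (0, 1]`, so `g` is
continuous on `[0, 1]`. Since `Df(x_t; ·)` is affine and vanishes at `x_t = (1 - t) x + t y`, the
right derivative equals `Df(x_t; y) - Df(x_t; x)`, which is continuous on `[0, 1]`, and the
fundamental theorem of calculus for right derivatives applies. -/

section

variable {X : Type*} [AddCommGroup X] [Module ℝ X]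

theorem hasDerivWithinAt_Ioi_zero_of_tendsto_radial {f : X → ℝ} {p q : X} {L : ℝ}
    (h : Tendsto (fun u : ℝ => (f ((1 - u) • p + u • q) - f p) / u) (𝓝[>] 0) (𝓝 L)) :
    HasDerivWithinAt (fun u : ℝ => f ((1 - u) • p + u • q)) L (Ioi 0) 0 := by
  rw [hasDerivWithinAt_iff_tendsto_slope' self_notMem_Ioi]
  refine h.congr fun u => ?_
  simp [slope_def_field]

theorem hasDerivWithinAt_radial_comp_affine {f : X → ℝ} {p q : X} {L a t : ℝ} {S : Set ℝ}
    (h : Tendsto (fun u : ℝ => (f ((1 - u) • p + u • q) - f p) / u) (𝓝[>] 0) (𝓝 L))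
    (hS : MapsTo (fun s => (s - t) / a) S (Ioi 0)) :
    HasDerivWithinAt (fun s => f ((1 - (s - t) / a) • p + ((s - t) / a) • q)) (L / a) S t := by
  have hlin : HasDerivWithinAt (fun s : ℝ => (s - t) / a) (1 / a) S t :=
    ((hasDerivWithinAt_id t S).sub_const t).div_const a
  rw [div_eq_mul_one_div]
  exact (hasDerivWithinAt_Ioi_zero_of_tendsto_radial h).comp_of_eq t hlin hS (by simp)

theorem radial_limit_self_eq_zero {f : X → ℝ} {p : X} {L : ℝ}
    (h : Tendsto (fun u : ℝ => (f ((1 - u) • p + u • p) - f p) / u) (𝓝[>] 0) (𝓝 L)) :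
    L = 0 := by
  refine tendsto_nhds_unique h (tendsto_const_nhds.congr fun u => ?_)
  rw [← add_smul, sub_add_cancel, one_smul, sub_self, zero_div]

theorem segment_eq_reparam_right (x y : X) {t : ℝ} (ht : t ≠ 1) (s : ℝ) :
    (1 - s) • x + s • y
      = (1 - (s - t) / (1 - t)) • ((1 - t) • x + t • y) + ((s - t) / (1 - t)) • y := by
  have : (1 : ℝ) - t ≠ 0 := sub_ne_zero.2 ht.symm
  match_scalars <;> field_simp <;> ring

theorem segment_eq_reparam_left (x y : X) {t : ℝ} (ht : t ≠ 0) (s : ℝ) :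
    (1 - s) • x + s • y
      = (1 - (s - t) / -t) • ((1 - t) • x + t • y) + ((s - t) / -t) • x := by
  match_scalars <;> field_simp <;> ring

theorem hasDerivWithinAt_segment_Ioi {f : X → ℝ} {x y : X} {t L : ℝ} (ht : t < 1)
    (h : Tendsto (fun u : ℝ => (f ((1 - u) • ((1 - t) • x + t • y) + u • y)
      - f ((1 - t) • x + t • y)) / u) (𝓝[>] 0) (𝓝 L)) :
    HasDerivWithinAt (fun s => f ((1 - s) • x + s • y)) (L / (1 - t)) (Ioi t) t := by
  convert hasDerivWithinAt_radial_comp_affine (t := t) (S := Ioi t) h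
    fun s hs => div_pos (sub_pos.2 hs) (sub_pos.2 ht) using 2 with s
  rw [segment_eq_reparam_right x y ht.ne s]

theorem hasDerivWithinAt_segment_Iio {f : X → ℝ} {x y : X} {t L : ℝ} (ht : 0 < t)
    (h : Tendsto (fun u : ℝ => (f ((1 - u) • ((1 - t) • x + t • y) + u • x)
      - f ((1 - t) • x + t • y)) / u) (𝓝[>] 0) (𝓝 L)) :
    HasDerivWithinAt (fun s => f ((1 - s) • x + s • y)) (L / -t) (Iio t) t := by
  convert hasDerivWithinAt_radial_comp_affine (t := t) (S := Iio t) h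
    fun s hs => div_pos_of_neg_of_neg (sub_neg.2 hs) (neg_neg_of_pos ht) using 2 with s
  rw [segment_eq_reparam_left x y ht.ne' s]

theorem continuousOn_Icc_of_continuousWithinAt_Ioi_Iio {g : ℝ → ℝ} {a b : ℝ}
    (hr : ∀ t ∈ Ico a b, ContinuousWithinAt g (Ioi t) t)
    (hl : ∀ t ∈ Ioc a b, ContinuousWithinAt g (Iio t) t) :
    ContinuousOn g (Icc a b) := by
  intro t ht
  rw [← Icc_union_Icc_eq_Icc ht.1 ht.2]
  refine ContinuousWithinAt.union ?_ ?_
  · rcases ht.1.eq_or_lt with rfl | hat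
    · simp
    · exact (continuousWithinAt_Iio_iff_Iic.1 (hl t ⟨hat, ht.2⟩)).mono Icc_subset_Iic_self
  · rcases ht.2.eq_or_lt with rfl | htb
    · simp
    · exact (continuousWithinAt_Ioi_iff_Ici.1 (hr t ⟨ht.1, htb⟩)).mono Icc_subset_Ici_self

theorem inv_one_sub_mul_eq_sub_of_affine {f φ : X → ℝ} {x y : X} {t : ℝ} (ht : t ≠ 1)
    (hself : Tendsto (fun u : ℝ => (f ((1 - u) • ((1 - t) • x + t • y) + u • ((1 - t) • x + t • y))
      - f ((1 - t) • x + t • y)) / u) (𝓝[>] 0) (𝓝 (φ ((1 - t) • x + t • y))))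
    (haff : φ ((1 - t) • x + t • y) = (1 - t) * φ x + t * φ y) :
    (1 - t)⁻¹ * φ y = φ y - φ x := by
  have h0 : (1 - t) * φ x + t * φ y = 0 := haff ▸ radial_limit_self_eq_zero hself
  have : (1 : ℝ) - t ≠ 0 := sub_ne_zero.2 ht.symm
  field_simp
  linear_combination h0

end

/-- if `f` is continuously wa-differentiable (the maps `t ↦ Df(x_t;y)` and
`t ↦ Df(x_t;x)` are continuous on `[0,1]`), then
`f(y) − f(x) = ∫₀¹ (1/(1−t)) Df(x_t;y) dt`. -/
theorem stmt_7 {X : Type*} [AddCommGroup X] [Module ℝ X]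
    (C : Set X) (hC : Convex ℝ C) (f : X → ℝ) (D : X → X → ℝ)
    (hD : ∀ x ∈ C, ∀ y ∈ C,
      Tendsto (fun t : ℝ => (f ((1 - t) • x + t • y) - f x) / t)
        (𝓝[>] 0) (𝓝 (D x y)))
    (haff : ∀ x ∈ C, ∀ y ∈ C, ∀ z ∈ C, ∀ t ∈ Set.Icc (0:ℝ) 1,
      D x ((1 - t) • y + t • z) = (1 - t) * D x y + t * D x z)
    (hcont1 : ∀ x ∈ C, ∀ y ∈ C,
      ContinuousOn (fun t : ℝ => D ((1 - t) • x + t • y) y) (Set.Icc 0 1))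
    (hcont2 : ∀ x ∈ C, ∀ y ∈ C,
      ContinuousOn (fun t : ℝ => D ((1 - t) • x + t • y) x) (Set.Icc 0 1)) :
    ∀ x ∈ C, ∀ y ∈ C,
      f y - f x = ∫ t in (0:ℝ)..1, (1 - t)⁻¹ * D ((1 - t) • x + t • y) y := by
  intro x hx y hy
  have hmem : ∀ t ∈ Icc (0 : ℝ) 1, (1 - t) • x + t • y ∈ C := fun t ht =>
    hC hx hy (sub_nonneg.2 ht.2) ht.1 (sub_add_cancel 1 t)
  have hquot : ∀ t ∈ Ico (0 : ℝ) 1, (1 - t)⁻¹ * D ((1 - t) • x + t • y) y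
      = D ((1 - t) • x + t • y) y - D ((1 - t) • x + t • y) x := fun t ht =>
    have hxt := hmem t (Ico_subset_Icc_self ht)
    inv_one_sub_mul_eq_sub_of_affine ht.2.ne (hD _ hxt _ hxt)
      (haff _ hxt x hx y hy t (Ico_subset_Icc_self ht))
  have hright : ∀ t ∈ Ico (0 : ℝ) 1, HasDerivWithinAt (fun s => f ((1 - s) • x + s • y))
      (D ((1 - t) • x + t • y) y - D ((1 - t) • x + t • y) x) (Ioi t) t := fun t ht => by
    rw [← hquot t ht, inv_mul_eq_div]
    exact hasDerivWithinAt_segment_Ioi ht.2 (hD _ (hmem t (Ico_subset_Icc_self ht)) y hy)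
  have hcont : ContinuousOn (fun s : ℝ => f ((1 - s) • x + s • y)) (Icc 0 1) :=
    continuousOn_Icc_of_continuousWithinAt_Ioi_Iio (fun t ht => (hright t ht).continuousWithinAt)
      fun t ht => (hasDerivWithinAt_segment_Iio ht.1
        (hD _ (hmem t (Ioc_subset_Icc_self ht)) x hx)).continuousWithinAt
  calc f y - f x = f ((1 - 1) • x + (1 : ℝ) • y) - f ((1 - 0) • x + (0 : ℝ) • y) := by simp
    _ = ∫ t in (0 : ℝ)..1, D ((1 - t) • x + t • y) y - D ((1 - t) • x + t • y) x :=
      (integral_eq_sub_of_hasDeriv_right_of_le zero_le_one hcont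
        (fun t ht => hright t (Ioo_subset_Ico_self ht))
        (((hcont1 x hx y hy).sub (hcont2 x hx y hy)).intervalIntegrable_of_Icc zero_le_one)).symm
    _ = ∫ t in (0 : ℝ)..1, (1 - t)⁻¹ * D ((1 - t) • x + t • y) y :=
      integral_congr_Ioo_of_le zero_le_one fun t ht => (hquot t (Ioo_subset_Ico_self ht)).symm
end

section
/- Let f : C → ℝ be wa-differentiable on a convex set C. Then the following are equivalent: (i) f is convex; (ii) f(y) ≥ f(x) + Df(x;y) for all x, y ∈ C; (iii) Df(x;y) + Df(y;x) ≤ 0 for all x, y ∈ C. -/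
open Set Filter Topology

private lemma aux_right {X : Type*} [AddCommGroup X] [Module ℝ X]
    (f : X → ℝ) (x y : X) (t : ℝ) (ht : t < 1) (L : ℝ)
    (h : Tendsto (fun s : ℝ =>
        (f ((1 - s) • ((1 - t) • x + t • y) + s • y) - f ((1 - t) • x + t • y)) / s)
      (𝓝[>] 0) (𝓝 L)) :
    HasDerivWithinAt (fun u : ℝ => f ((1 - u) • x + u • y)) (L / (1 - t)) (Ici t) t := by
  have h1t : (0:ℝ) < 1 - t := by linarith
  rw [hasDerivWithinAt_iff_tendsto_slope, Ici_sdiff_left]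
  set n : ℝ → ℝ := fun u => (u - t) / (1 - t) with hn
  have hncont : Continuous n := by fun_prop
  have hntend : Tendsto n (𝓝[>] t) (𝓝[>] 0) := by
    apply tendsto_nhdsWithin_of_tendsto_nhds_of_eventually_within
    · have h0 : Tendsto n (𝓝[>] t) (𝓝 (n t)) :=
        (hncont.tendsto t).mono_left nhdsWithin_le_nhds
      simpa [hn] using h0
    · filter_upwards [self_mem_nhdsWithin] with u hu
      exact div_pos (sub_pos.2 hu) h1t
  have hcomp := h.comp hntend
  have hfinal : Tendsto (fun u => (1 / (1 - t)) *
      ((f ((1 - n u) • ((1 - t) • x + t • y) + n u • y) - f ((1 - t) • x + t • y)) / n u))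
      (𝓝[>] t) (𝓝 ((1 / (1 - t)) * L)) := hcomp.const_mul _
  have heq : (1 / (1 - t)) * L = L / (1 - t) := by ring
  rw [← heq]
  apply hfinal.congr'
  filter_upwards [self_mem_nhdsWithin] with u hu
  have hut : t < u := hu
  have hut' : u - t ≠ 0 := by linarith
  have h1t' : (1:ℝ) - t ≠ 0 := ne_of_gt h1t
  have key : (1 - n u) • ((1 - t) • x + t • y) + n u • y = (1 - u) • x + u • y := by
    match_scalars
    · linear_combination (t - u) * mul_inv_cancel₀ h1t'
    · linear_combination (u - t) * mul_inv_cancel₀ h1t'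
  rw [key, slope_def_field]
  have hnval : n u = (u - t) / (1 - t) := rfl
  rw [hnval]
  field_simp
  try ring

private lemma aux_left {X : Type*} [AddCommGroup X] [Module ℝ X]
    (f : X → ℝ) (x y : X) (t : ℝ) (ht : 0 < t) (L : ℝ)
    (h : Tendsto (fun s : ℝ =>
        (f ((1 - s) • ((1 - t) • x + t • y) + s • x) - f ((1 - t) • x + t • y)) / s)
      (𝓝[>] 0) (𝓝 L)) :
    HasDerivWithinAt (fun u : ℝ => f ((1 - u) • x + u • y)) (-(L / t)) (Iic t) t := by
  rw [hasDerivWithinAt_iff_tendsto_slope, Iic_diff_right]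
  set n : ℝ → ℝ := fun u => (t - u) / t with hn
  have hncont : Continuous n := by fun_prop
  have hntend : Tendsto n (𝓝[<] t) (𝓝[>] 0) := by
    apply tendsto_nhdsWithin_of_tendsto_nhds_of_eventually_within
    · have h0 : Tendsto n (𝓝[<] t) (𝓝 (n t)) :=
        (hncont.tendsto t).mono_left nhdsWithin_le_nhds
      simpa [hn] using h0
    · filter_upwards [self_mem_nhdsWithin] with u hu
      exact div_pos (sub_pos.2 hu) ht
  have hcomp := h.comp hntend
  have hfinal : Tendsto (fun u => (-(1 / t)) *
      ((f ((1 - n u) • ((1 - t) • x + t • y) + n u • x) - f ((1 - t) • x + t • y)) / n u))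
      (𝓝[<] t) (𝓝 ((-(1 / t)) * L)) := hcomp.const_mul _
  have heq : (-(1 / t)) * L = -(L / t) := by ring
  rw [← heq]
  apply hfinal.congr'
  filter_upwards [self_mem_nhdsWithin] with u hu
  have hut : u < t := hu
  have hut' : t - u ≠ 0 := by linarith
  have hut'' : u - t ≠ 0 := by intro h; apply hut'; linarith [sub_eq_zero.1 h]
  have ht' : t ≠ 0 := ne_of_gt ht
  have key : (1 - n u) • ((1 - t) • x + t • y) + n u • x = (1 - u) • x + u • y := by
    match_scalars
    · linear_combination (t - u) * mul_inv_cancel₀ ht'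
    · linear_combination (u - t) * mul_inv_cancel₀ ht'
  rw [key, slope_def_field]
  have hnval : n u = (t - u) / t := rfl
  rw [hnval]
  field_simp
  try ring

/-- for a wa-differentiable `f : C → ℝ` the following are equivalent:
(i) `f` is convex; (ii) `f(y) ≥ f(x) + Df(x;y)` for all `x,y ∈ C`;
(iii) `Df(x;y) + Df(y;x) ≤ 0` for all `x,y ∈ C`. -/
theorem stmt_8 {X : Type*} [AddCommGroup X] [Module ℝ X]
    (C : Set X) (hC : Convex ℝ C) (f : X → ℝ) (D : X → X → ℝ)
    (hD : ∀ x ∈ C, ∀ y ∈ C,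
      Tendsto (fun t : ℝ => (f ((1 - t) • x + t • y) - f x) / t)
        (𝓝[>] 0) (𝓝 (D x y)))
    (haff : ∀ x ∈ C, ∀ y ∈ C, ∀ z ∈ C, ∀ t ∈ Set.Icc (0:ℝ) 1,
      D x ((1 - t) • y + t • z) = (1 - t) * D x y + t * D x z) :
    ((∀ x ∈ C, ∀ y ∈ C, ∀ t ∈ Set.Icc (0:ℝ) 1,
        f (t • x + (1 - t) • y) ≤ t * f x + (1 - t) * f y) ↔
      (∀ x ∈ C, ∀ y ∈ C, f x + D x y ≤ f y)) ∧
    ((∀ x ∈ C, ∀ y ∈ C, f x + D x y ≤ f y) ↔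
      (∀ x ∈ C, ∀ y ∈ C, D x y + D y x ≤ 0)) := by
  -- D x x = 0
  have hDself : ∀ x ∈ C, D x x = 0 := by
    intro x hx
    have h0 : Tendsto (fun t : ℝ => (f ((1 - t) • x + t • x) - f x) / t)
        (𝓝[>] (0:ℝ)) (𝓝 0) := by
      have e : (fun t : ℝ => (f ((1 - t) • x + t • x) - f x) / t) = fun _ => (0:ℝ) := by
        funext t
        have : (1 - t) • x + t • x = x := by
          rw [← add_smul]; norm_num
        rw [this, sub_self, zero_div]
      rw [e]; exact tendsto_const_nhds
    exact tendsto_nhds_unique (hD x hx x hx) h0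
  -- (ii) ⇒ (iii) is trivial; (iii) ⇒ (ii) is the MVT argument
  have h23 : (∀ x ∈ C, ∀ y ∈ C, D x y + D y x ≤ 0) →
      (∀ x ∈ C, ∀ y ∈ C, f x + D x y ≤ f y) := by
    intro h3 x hx y hy
    set φ : ℝ → ℝ := fun u => f ((1 - u) • x + u • y) with hφ
    have hmem : ∀ t ∈ Icc (0:ℝ) 1, (1 - t) • x + t • y ∈ C := fun t ht =>
      hC hx hy (by linarith [ht.2]) ht.1 (by ring)
    have hx0 : ((1:ℝ) - 0) • x + (0:ℝ) • y = x := by simp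
    have hx1 : ((1:ℝ) - 1) • x + (1:ℝ) • y = y := by simp
    have hderivR : ∀ t ∈ Ico (0:ℝ) 1,
        HasDerivWithinAt φ (D ((1 - t) • x + t • y) y / (1 - t)) (Ici t) t := by
      intro t ht
      exact aux_right f x y t ht.2 _ (hD _ (hmem t ⟨ht.1, le_of_lt ht.2⟩) y hy)
    have hderivL : ∀ t ∈ Ioc (0:ℝ) 1,
        HasDerivWithinAt φ (-(D ((1 - t) • x + t • y) x / t)) (Iic t) t := by
      intro t ht
      exact aux_left f x y t ht.1 _ (hD _ (hmem t ⟨le_of_lt ht.1, ht.2⟩) x hx)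
    have hcont : ContinuousOn φ (Icc 0 1) := by
      intro t ht
      rcases lt_or_eq_of_le ht.2 with h1 | h1
      · rcases eq_or_lt_of_le ht.1 with h0 | h0
        · exact ((hderivR t ⟨ht.1, h1⟩).continuousWithinAt).mono
            (fun u hu => by rw [← h0]; exact hu.1)
        · exact (((hderivL t ⟨h0, ht.2⟩).continuousWithinAt).union
            ((hderivR t ⟨ht.1, h1⟩).continuousWithinAt)).mono
            (fun u _ => (le_total u t).imp id id)
      · exact ((hderivL t ⟨by linarith [h1], ht.2⟩).continuousWithinAt).mono
          (fun u hu => le_trans hu.2 h1.ge)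
    have hbound : ∀ t ∈ Ico (0:ℝ) 1, D x y ≤ D ((1 - t) • x + t • y) y / (1 - t) := by
      intro t ht
      have h1t : (0:ℝ) < 1 - t := by linarith [ht.2]
      set z := (1 - t) • x + t • y with hz
      have hzC : z ∈ C := hmem t ⟨ht.1, le_of_lt ht.2⟩
      have hIcc : t ∈ Icc (0:ℝ) 1 := ⟨ht.1, le_of_lt ht.2⟩
      have e1 : (0:ℝ) = (1 - t) * D z x + t * D z y := by
        have e := haff z hzC x hx y hy t hIcc
        rw [← hz, hDself z hzC] at e
        exact e
      have e2 : D x z = t * D x y := by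
        have e := haff x hx x hx y hy t hIcc
        rw [← hz, hDself x hx] at e
        linarith [e]
      have e3 := h3 x hx z hzC
      rw [le_div_iff₀ h1t]
      rcases eq_or_lt_of_le ht.1 with h0 | h0
      · have hz0 : z = x := by rw [hz, ← h0]; simp
        rw [hz0, ← h0]
        simp
      · nlinarith [mul_le_mul_of_nonneg_left
          (show t * D x y ≤ -D z x by linarith) (le_of_lt h1t), h0]
    have hlin : ∀ u : ℝ, HasDerivAt (fun u : ℝ => f x + D x y * u) (D x y) u := by
      intro u
      simpa using ((hasDerivAt_id u).const_mul (D x y)).const_add (f x)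
    have main := image_le_of_deriv_right_le_deriv_boundary
      (f := fun u : ℝ => f x + D x y * u) (f' := fun _ => D x y) (a := 0) (b := 1)
      (B := φ) (B' := fun t => D ((1 - t) • x + t • y) y / (1 - t))
      (by fun_prop) (fun u _ => (hlin u).hasDerivWithinAt)
      (by simp [hφ, hx0]) hcont hderivR hbound
      (right_mem_Icc.2 zero_le_one)
    have main' : f x + D x y * 1 ≤ φ 1 := main
    have hφ1 : φ 1 = f y := by rw [hφ]; simp [hx1]
    rw [hφ1] at main'
    linarith [main']
  constructor
  · constructor
    · -- (i) ⇒ (ii)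
      intro hconv x hx y hy
      have key : ∀ᶠ t in 𝓝[>] (0:ℝ),
          (f ((1 - t) • x + t • y) - f x) / t ≤ f y - f x := by
        filter_upwards [Ioo_mem_nhdsGT_of_mem
          (⟨le_refl (0:ℝ), zero_lt_one⟩ : (0:ℝ) ∈ Ico (0:ℝ) 1)] with t htm
        have h1 := hconv y hy x hx t ⟨le_of_lt htm.1, le_of_lt htm.2⟩
        rw [div_le_iff₀ htm.1, show (1 - t) • x + t • y = t • y + (1 - t) • x from add_comm _ _]
        nlinarith [h1]
      have := le_of_tendsto (hD x hx y hy) key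
      linarith
    · -- (ii) ⇒ (i)
      intro h2 x hx y hy t ht
      have hzC : t • x + (1 - t) • y ∈ C := hC hx hy ht.1 (by linarith [ht.2]) (by ring)
      set z := t • x + (1 - t) • y with hz
      have h1t : (1 : ℝ) - t ∈ Icc (0:ℝ) 1 := ⟨by linarith [ht.2], by linarith [ht.1]⟩
      have e0 : D z z = (1 - (1 - t)) * D z x + (1 - t) * D z y := by
        have e := haff z hzC x hx y hy (1 - t) h1t
        rw [show ((1:ℝ) - (1 - t)) = t by ring] at e ⊢
        rw [← hz] at e
        exact e
      rw [hDself z hzC, show ((1:ℝ) - (1 - t)) = t by ring] at e0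
      have hA := h2 z hzC x hx
      have hB := h2 z hzC y hy
      nlinarith [mul_le_mul_of_nonneg_left hA ht.1,
        mul_le_mul_of_nonneg_left hB (show (0:ℝ) ≤ 1 - t by linarith [ht.2])]
  · constructor
    · intro h2 x hx y hy
      linarith [h2 x hx y hy, h2 y hy x hx]
    · exact h23
end

section
/- Let f : C → ℝ be convex and a-differentiable at x ∈ C with affine gradient x* ∈ X* (i.e. Df(x;y) = ⟨y − x, x*⟩ for all y ∈ C). Then the subdifferential satisfies ∂f(x) = x* + N_C(x), where N_C(x) = (C − x)⁻ is the normal cone. Moreover, if x belongs to the relative algebraic interior of C, then ∂f(x) = x* + (C − C)^⊥. -/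
open Set Filter Topology Pointwise

/-- for a convex `f : C → ℝ` that is a-differentiable at `x ∈ C` with
affine gradient `x*`, the subdifferential satisfies `∂f(x) = x* + N_C(x)`; moreover,
if `x` is in the relative algebraic interior of `C`, `∂f(x) = x* + (C−C)^⊥`. -/
theorem stmt_10 {X Xs : Type*} [AddCommGroup X] [Module ℝ X]
    [AddCommGroup Xs] [Module ℝ Xs]
    (p : X →ₗ[ℝ] Xs →ₗ[ℝ] ℝ) (C : Set X) (hC : Convex ℝ C) (f : X → ℝ)
    (hconv : ∀ x ∈ C, ∀ y ∈ C, ∀ t ∈ Set.Icc (0:ℝ) 1,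
      f (t • x + (1 - t) • y) ≤ t * f x + (1 - t) * f y)
    (x : X) (hx : x ∈ C) (xs : Xs)
    (hdiff : ∀ y ∈ C,
      Tendsto (fun t : ℝ => (f ((1 - t) • x + t • y) - f x) / t)
        (𝓝[>] 0) (𝓝 (p (y - x) xs))) :
    ({zs : Xs | ∀ y ∈ C, f x + p (y - x) zs ≤ f y} =
      ({xs} : Set Xs) + {zs : Xs | ∀ y ∈ C, p (y - x) zs ≤ 0}) ∧
    ((∀ y ∈ affineSpan ℝ C, ∃ ε > (0:ℝ), x + ε • (y - x) ∈ C) →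
      {zs : Xs | ∀ y ∈ C, f x + p (y - x) zs ≤ f y} =
        ({xs} : Set Xs) + {zs : Xs | ∀ z ∈ C - C, p z zs = 0}) := by
  -- Key fact: xs itself is a subgradient.
  have key : ∀ y ∈ C, f x + p (y - x) xs ≤ f y := by
    intro y hy
    have hb : ∀ᶠ t in 𝓝[>] (0:ℝ),
        (f ((1 - t) • x + t • y) - f x) / t ≤ f y - f x := by
      filter_upwards [Ioo_mem_nhdsGT_of_mem (Set.left_mem_Ico.2 one_pos)] with t ht
      have h := hconv y hy x hx t ⟨ht.1.le, ht.2.le⟩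
      rw [div_le_iff₀ ht.1, add_comm ((1 - t) • x)]
      nlinarith [ht.1, ht.2]
    have := le_of_tendsto (hdiff y hy) hb
    linarith
  -- First part.
  have part1 : {zs : Xs | ∀ y ∈ C, f x + p (y - x) zs ≤ f y} =
      ({xs} : Set Xs) + {zs : Xs | ∀ y ∈ C, p (y - x) zs ≤ 0} := by
    ext zs
    simp only [Set.singleton_add, Set.image_add_left, Set.mem_preimage,
      Set.mem_setOf_eq, map_add, map_neg, LinearMap.neg_apply]
    constructor
    · intro hz y hy
      -- show p (y-x) zs ≤ p (y-x) xs, via limit from the right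
      have hup : ∀ᶠ t in 𝓝[>] (0:ℝ),
          p (y - x) zs ≤ (f ((1 - t) • x + t • y) - f x) / t := by
        filter_upwards [Ioo_mem_nhdsGT_of_mem (Set.left_mem_Ico.2 one_pos)] with t ht
        have hyt : (1 - t) • x + t • y ∈ C :=
          hC hx hy (by linarith [ht.2]) ht.1.le (by ring)
        have h := hz _ hyt
        have heq : (1 - t) • x + t • y - x = t • (y - x) := by module
        rw [heq, map_smul, LinearMap.smul_apply, smul_eq_mul] at h
        rw [le_div_iff₀ ht.1]
        linarith
      have := ge_of_tendsto (hdiff y hy) hup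
      linarith
    · intro hz y hy
      have h1 := key y hy
      have h2 := hz y hy
      linarith
  refine ⟨part1, fun hri => ?_⟩
  rw [part1]
  congr 1
  ext zs
  simp only [Set.mem_setOf_eq]
  constructor
  · intro h z hz
    rw [Set.mem_sub] at hz
    obtain ⟨a, ha, b, hb, rfl⟩ := hz
    have zero_of_mem : ∀ a ∈ C, p (a - x) zs = 0 := by
      intro a ha
      have hle := h a ha
      -- reflected point
      have hy : (1:ℝ) • (x -ᵥ a) +ᵥ x ∈ affineSpan ℝ C :=
        AffineSubspace.smul_vsub_vadd_mem _ 1 (subset_affineSpan ℝ C hx)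
          (subset_affineSpan ℝ C ha) (subset_affineSpan ℝ C hx)
      obtain ⟨ε, hε, hmem⟩ := hri _ hy
      have heq : x + ε • (((1:ℝ) • (x -ᵥ a) +ᵥ x) - x) = x + ε • (x - a) := by
        simp [vsub_eq_sub, vadd_eq_add]
      rw [heq] at hmem
      have h2 := h _ hmem
      have heq2 : x + ε • (x - a) - x = ε • (x - a) := by module
      rw [heq2, map_smul, LinearMap.smul_apply, smul_eq_mul] at h2
      have h3 : p (x - a) zs ≤ 0 := nonpos_of_mul_nonpos_right (by linarith) hε
      have h4 : p (x - a) zs = - p (a - x) zs := by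
        rw [show x - a = -(a - x) by abel, map_neg, LinearMap.neg_apply]
      linarith [h4 ▸ h3, hle]
    have := zero_of_mem a ha
    have := zero_of_mem b hb
    have heq : a - b = (a - x) - (b - x) := by abel
    rw [heq, map_sub, LinearMap.sub_apply]
    linarith
  · intro h y hy
    have := h (y - x) (Set.sub_mem_sub hy hx)
    linarith
end

section
/- If f, g : C → ℝ are convex and both a-differentiable at x ∈ C, then ∂(f+g)(x) = ∂f(x) + ∂g(x). -/
open Set Filter Topology Pointwise

lemma stmt11_aux {X Xs : Type*} [AddCommGroup X] [Module ℝ X]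
    [AddCommGroup Xs] [Module ℝ Xs]
    (p : X →ₗ[ℝ] Xs →ₗ[ℝ] ℝ) (C : Set X) (hC : Convex ℝ C) (h : X → ℝ)
    (hconv : ∀ x ∈ C, ∀ y ∈ C, ∀ t ∈ Set.Icc (0:ℝ) 1,
      h (t • x + (1 - t) • y) ≤ t * h x + (1 - t) * h y)
    (x : X) (hx : x ∈ C) (zs0 : Xs)
    (hd : ∀ y ∈ C,
      Tendsto (fun t : ℝ => (h ((1 - t) • x + t • y) - h x) / t)
        (𝓝[>] 0) (𝓝 (p (y - x) zs0))) :
    {zs : Xs | ∀ y ∈ C, h x + p (y - x) zs ≤ h y} =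
      {zs : Xs | ∀ y ∈ C, p (y - x) zs ≤ p (y - x) zs0} := by
  have hIoc : Ioc (0:ℝ) 1 ∈ 𝓝[>] (0:ℝ) := Ioc_mem_nhdsGT_of_mem ⟨le_refl 0, one_pos⟩
  have key0 : ∀ y ∈ C, p (y - x) zs0 ≤ h y - h x := by
    intro y hy
    refine le_of_tendsto (hd y hy) ?_
    filter_upwards [hIoc] with t ht
    have hcv := hconv y hy x hx t ⟨ht.1.le, ht.2⟩
    have heq : (1 - t) • x + t • y = t • y + (1 - t) • x := by abel
    rw [heq, div_le_iff₀ ht.1]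
    nlinarith [hcv]
  ext zs
  simp only [Set.mem_setOf_eq]
  constructor
  · intro hzs y hy
    refine ge_of_tendsto (hd y hy) ?_
    filter_upwards [hIoc] with t ht
    have hmem : (1 - t) • x + t • y ∈ C := hC hx hy (by linarith [ht.2]) ht.1.le (by ring)
    have hsub := hzs _ hmem
    have heq : (1 - t) • x + t • y - x = t • (y - x) := by
      module
    rw [heq, map_smul, LinearMap.smul_apply, smul_eq_mul] at hsub
    rw [le_div_iff₀ ht.1]
    linarith
  · intro hzs y hy
    have h1 := key0 y hy
    have h2 := hzs y hy
    linarith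

/-- if `f, g : C → ℝ` are convex and both a-differentiable at `x ∈ C`,
then `∂(f+g)(x) = ∂f(x) + ∂g(x)`. -/
theorem stmt_11 {X Xs : Type*} [AddCommGroup X] [Module ℝ X]
    [AddCommGroup Xs] [Module ℝ Xs]
    (p : X →ₗ[ℝ] Xs →ₗ[ℝ] ℝ) (C : Set X) (hC : Convex ℝ C) (f g : X → ℝ)
    (hconvf : ∀ x ∈ C, ∀ y ∈ C, ∀ t ∈ Set.Icc (0:ℝ) 1,
      f (t • x + (1 - t) • y) ≤ t * f x + (1 - t) * f y)
    (hconvg : ∀ x ∈ C, ∀ y ∈ C, ∀ t ∈ Set.Icc (0:ℝ) 1,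
      g (t • x + (1 - t) • y) ≤ t * g x + (1 - t) * g y)
    (x : X) (hx : x ∈ C) (xs ys : Xs)
    (hdf : ∀ y ∈ C,
      Tendsto (fun t : ℝ => (f ((1 - t) • x + t • y) - f x) / t)
        (𝓝[>] 0) (𝓝 (p (y - x) xs)))
    (hdg : ∀ y ∈ C,
      Tendsto (fun t : ℝ => (g ((1 - t) • x + t • y) - g x) / t)
        (𝓝[>] 0) (𝓝 (p (y - x) ys))) :
    {zs : Xs | ∀ y ∈ C, f x + g x + p (y - x) zs ≤ f y + g y} =
      {zs : Xs | ∀ y ∈ C, f x + p (y - x) zs ≤ f y} +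
        {zs : Xs | ∀ y ∈ C, g x + p (y - x) zs ≤ g y} := by
  have Ef := stmt11_aux p C hC f hconvf x hx xs hdf
  have Eg := stmt11_aux p C hC g hconvg x hx ys hdg
  have EF : {zs : Xs | ∀ y ∈ C, f x + g x + p (y - x) zs ≤ f y + g y} =
      {zs : Xs | ∀ y ∈ C, p (y - x) zs ≤ p (y - x) (xs + ys)} := by
    have := stmt11_aux p C hC (fun z => f z + g z)
      (fun a ha b hb t ht => by
        have h1 := hconvf a ha b hb t ht
        have h2 := hconvg a ha b hb t ht
        nlinarith)
      x hx (xs + ys)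
      (fun y hy => by
        have := (hdf y hy).add (hdg y hy)
        rw [map_add]
        refine this.congr fun t => by ring)
    rw [← this]
  rw [EF, Ef, Eg]
  ext zs
  simp only [Set.mem_add, Set.mem_setOf_eq]
  constructor
  · intro hzs
    refine ⟨zs - ys, fun y hy => ?_, ys, fun y hy => le_refl _, sub_add_cancel zs ys⟩
    have := hzs y hy
    rw [map_add] at this
    rw [map_sub]
    linarith
  · rintro ⟨a, ha, b, hb, rfl⟩ y hy
    have h1 := ha y hy
    have h2 := hb y hy
    rw [map_add, map_add]
    linarith
end

section
/- A wa-differentiable function f : C → ℝ on a convex set C is quasiconvex if and only if for all x, y ∈ C, f(y) ≤ f(x) implies Df(x;y) ≤ 0. -/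
/-!
Restrict `f` to the segment: `φ r = f ((1 - r) • x + r • y)`. The radial limits of `f` at
`p = (1 - r) • x + r • y` towards `y` and towards `x` are one-sided derivatives of `φ` at `r`
(after rescaling by `1 - r`, resp. `-r`), so `φ` is continuous on `[0, 1)` with right derivative
`D(p; y) / (1 - r)`. Wherever `φ` exceeds `M = max (f x) (f y) ≥ f y`, the hypothesis gives
`D(p; y) ≤ 0`, and a continuous function starting at `φ 0 = f x ≤ M` whose right derivative is
nonpositive wherever it exceeds `M` never exceeds `M`. Conversely, quasiconvexity makes every
difference quotient defining `D(x; y)` nonpositive when `f y ≤ f x`.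
-/

open Set Filter Topology

section OneSidedDerivatives

variable {g : ℝ → ℝ} {s c L : ℝ}

theorem tendsto_slope_of_tendsto_div_comp {l : Filter ℝ} (hl : l ≤ 𝓝 s)
    (hpos : ∀ᶠ z in l, 0 < (z - s) / c)
    (h : Tendsto (fun u => (g (s + u * c) - g s) / u) (𝓝[>] 0) (𝓝 L)) :
    Tendsto (slope g s) l (𝓝 (L / c)) := by
  have hrescale : Tendsto (fun z => (z - s) / c) l (𝓝[>] 0) :=
    tendsto_nhdsWithin_iff.2
      ⟨(((continuous_sub_right s).div_const c).tendsto' s 0 (by simp)).mono_left hl, hpos⟩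
  refine ((h.comp hrescale).div_const c).congr' ?_
  filter_upwards [hpos] with z hz
  have hc : c ≠ 0 := by rintro rfl; simp at hz
  have hzs : z - s ≠ 0 := by intro h; simp [h] at hz
  simp only [Function.comp_apply, slope_def_field]
  rw [div_mul_cancel₀ _ hc, add_sub_cancel, div_div, div_mul_cancel₀ _ hc]

theorem hasDerivWithinAt_Ioi_of_tendsto_div_comp (hc : 0 < c)
    (h : Tendsto (fun u => (g (s + u * c) - g s) / u) (𝓝[>] 0) (𝓝 L)) :
    HasDerivWithinAt g (L / c) (Ioi s) s :=
  (hasDerivWithinAt_iff_tendsto_slope' self_notMem_Ioi).2 <|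
    tendsto_slope_of_tendsto_div_comp nhdsWithin_le_nhds
      (eventually_nhdsWithin_of_forall fun _ hz => div_pos (sub_pos.2 hz) hc) h

theorem hasDerivWithinAt_Iio_of_tendsto_div_comp (hc : c < 0)
    (h : Tendsto (fun u => (g (s + u * c) - g s) / u) (𝓝[>] 0) (𝓝 L)) :
    HasDerivWithinAt g (L / c) (Iio s) s :=
  (hasDerivWithinAt_iff_tendsto_slope' self_notMem_Iio).2 <|
    tendsto_slope_of_tendsto_div_comp nhdsWithin_le_nhds
      (eventually_nhdsWithin_of_forall fun _ hz => div_pos_of_neg_of_neg (sub_neg.2 hz) hc) h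

end OneSidedDerivatives

theorem image_le_of_deriv_right_nonpos_of_gt {φ φ' : ℝ → ℝ} {a b M : ℝ}
    (hφ : ContinuousOn φ (Icc a b)) (hφ' : ∀ s ∈ Ico a b, HasDerivWithinAt φ (φ' s) (Ici s) s)
    (ha : φ a ≤ M) (hM : ∀ s ∈ Ico a b, M < φ s → φ' s ≤ 0) {s : ℝ} (hs : s ∈ Icc a b) :
    φ s ≤ M := by
  have hfence : ∀ ε > 0, φ s ≤ M + ε * (s - a + 1) := fun ε hε =>
    image_le_of_deriv_right_lt_deriv_boundary hφ hφ' (B := fun r => M + ε * (r - a + 1))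
      (by linarith)
      (fun r => ((((hasDerivAt_id r).sub_const a).add_const 1).const_mul ε).const_add M)
      (fun r hr hφr => by
        have hgt : M < φ r := hφr ▸ lt_add_of_pos_right M (mul_pos hε (by linarith [hr.1]))
        simpa using (hM r hr hgt).trans_lt hε) hs
  refine le_of_forall_pos_le_add fun ε hε => ?_
  have hlen : 0 < s - a + 1 := by linarith [hs.1]
  simpa [div_mul_cancel₀ _ hlen.ne'] using hfence (ε / (s - a + 1)) (div_pos hε hlen)

section Segment

variable {X : Type*} [AddCommGroup X] [Module ℝ X] {f : X → ℝ} {x y : X} {s d : ℝ}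

theorem hasDerivWithinAt_Ioi_segment (hs : s < 1)
    (h : Tendsto (fun u => (f ((1 - u) • ((1 - s) • x + s • y) + u • y)
      - f ((1 - s) • x + s • y)) / u) (𝓝[>] 0) (𝓝 d)) :
    HasDerivWithinAt (fun r => f ((1 - r) • x + r • y)) (d / (1 - s)) (Ioi s) s := by
  refine hasDerivWithinAt_Ioi_of_tendsto_div_comp (sub_pos.2 hs) ?_
  have hpath : ∀ u : ℝ, (1 - (s + u * (1 - s))) • x + (s + u * (1 - s)) • y
      = (1 - u) • ((1 - s) • x + s • y) + u • y := fun u => by module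
  simp only [hpath]
  exact h

theorem continuousWithinAt_Iio_segment (hs : 0 < s)
    (h : Tendsto (fun u => (f ((1 - u) • ((1 - s) • x + s • y) + u • x)
      - f ((1 - s) • x + s • y)) / u) (𝓝[>] 0) (𝓝 d)) :
    ContinuousWithinAt (fun r => f ((1 - r) • x + r • y)) (Iio s) s := by
  refine (hasDerivWithinAt_Iio_of_tendsto_div_comp (c := -s) (L := d) (neg_neg_of_pos hs) ?_
    ).continuousWithinAt
  have hpath : ∀ u : ℝ, (1 - (s + u * -s)) • x + (s + u * -s) • y
      = (1 - u) • ((1 - s) • x + s • y) + u • x := fun u => by module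
  simp only [hpath]
  exact h

end Segment

section Quasiconvex

variable {X : Type*} [AddCommGroup X] [Module ℝ X] {C : Set X} {f : X → ℝ} {D : X → X → ℝ}
  {x y : X}

theorem nonpos_of_tendsto_of_segment_le {d : ℝ}
    (h : Tendsto (fun t : ℝ => (f ((1 - t) • x + t • y) - f x) / t) (𝓝[>] 0) (𝓝 d))
    (hle : ∀ t ∈ Ioo (0 : ℝ) 1, f ((1 - t) • x + t • y) ≤ f x) : d ≤ 0 :=
  le_of_tendsto h <| by
    filter_upwards [Ioo_mem_nhdsGT one_pos] with t ht
    exact div_nonpos_of_nonpos_of_nonneg (sub_nonpos.2 (hle t ht)) ht.1.le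

theorem continuousOn_comp_segment (hC : Convex ℝ C)
    (hD : ∀ x ∈ C, ∀ y ∈ C,
      Tendsto (fun t : ℝ => (f ((1 - t) • x + t • y) - f x) / t) (𝓝[>] 0) (𝓝 (D x y)))
    (hx : x ∈ C) (hy : y ∈ C) :
    ContinuousOn (fun r : ℝ => f ((1 - r) • x + r • y)) (Ico 0 1) := by
  intro r hr
  have hp : (1 - r) • x + r • y ∈ C := hC hx hy (sub_nonneg.2 hr.2.le) hr.1 (sub_add_cancel 1 r)
  have hright := continuousWithinAt_Ioi_iff_Ici.1
    (hasDerivWithinAt_Ioi_segment hr.2 (hD _ hp y hy)).continuousWithinAt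
  rcases hr.1.eq_or_lt with rfl | hr0
  · exact hright.mono Ico_subset_Ici_self
  · have hleft :=
      continuousWithinAt_Iio_iff_Iic.1 (continuousWithinAt_Iio_segment hr0 (hD _ hp x hx))
    exact (continuousAt_iff_continuous_left_right.2 ⟨hleft, hright⟩).continuousWithinAt

theorem segment_le_max_of_dirDeriv_nonpos (hC : Convex ℝ C)
    (hD : ∀ x ∈ C, ∀ y ∈ C,
      Tendsto (fun t : ℝ => (f ((1 - t) • x + t • y) - f x) / t) (𝓝[>] 0) (𝓝 (D x y)))
    (hcond : ∀ x ∈ C, ∀ y ∈ C, f y ≤ f x → D x y ≤ 0) (hx : x ∈ C) (hy : y ∈ C) {s : ℝ}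
    (hs : s ∈ Ico (0 : ℝ) 1) : f ((1 - s) • x + s • y) ≤ max (f x) (f y) := by
  have hp : ∀ r ∈ Ico (0 : ℝ) 1, (1 - r) • x + r • y ∈ C := fun r hr =>
    hC hx hy (sub_nonneg.2 hr.2.le) hr.1 (sub_add_cancel 1 r)
  have hsub : Ico 0 s ⊆ Ico (0 : ℝ) 1 := Ico_subset_Ico_right hs.2.le
  refine image_le_of_deriv_right_nonpos_of_gt
    ((continuousOn_comp_segment hC hD hx hy).mono (Icc_subset_Ico_right hs.2))
    (fun r hr => (hasDerivWithinAt_Ioi_segment (hsub hr).2 (hD _ (hp r (hsub hr)) y hy)).Ici_of_Ioi)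
    (by simp) (fun r hr hgt => ?_) ⟨hs.1, le_rfl⟩
  exact div_nonpos_of_nonpos_of_nonneg
    (hcond _ (hp r (hsub hr)) y hy ((le_max_right _ _).trans hgt.le)) (sub_nonneg.2 (hsub hr).2.le)

end Quasiconvex

theorem stmt_12_general {X : Type*} [AddCommGroup X] [Module ℝ X]
    (C : Set X) (hC : Convex ℝ C) (f : X → ℝ) (D : X → X → ℝ)
    (hD : ∀ x ∈ C, ∀ y ∈ C,
      Tendsto (fun t : ℝ => (f ((1 - t) • x + t • y) - f x) / t)
        (𝓝[>] 0) (𝓝 (D x y))) :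
    (∀ x ∈ C, ∀ y ∈ C, ∀ t ∈ Set.Ioo (0:ℝ) 1,
        f (t • x + (1 - t) • y) ≤ max (f x) (f y)) ↔
      (∀ x ∈ C, ∀ y ∈ C, f y ≤ f x → D x y ≤ 0) := by
  constructor
  · intro hqc x hx y hy hyx
    refine nonpos_of_tendsto_of_segment_le (hD x hx y hy) fun t ht => ?_
    have h := hqc x hx y hy (1 - t) ⟨sub_pos.2 ht.2, sub_lt_self 1 ht.1⟩
    rwa [sub_sub_cancel, max_eq_left hyx] at h
  · intro hcond x hx y hy t ht
    have h := segment_le_max_of_dirDeriv_nonpos hC hD hcond hx hy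
      (s := 1 - t) ⟨sub_nonneg.2 ht.2.le, sub_lt_self 1 ht.1⟩
    rwa [sub_sub_cancel] at h

/-- a wa-differentiable `f : C → ℝ` is quasiconvex iff
`f(y) ≤ f(x)` implies `Df(x;y) ≤ 0`, for all `x, y ∈ C`. -/
theorem stmt_12 {X : Type*} [AddCommGroup X] [Module ℝ X]
    (C : Set X) (hC : Convex ℝ C) (f : X → ℝ) (D : X → X → ℝ)
    (hD : ∀ x ∈ C, ∀ y ∈ C,
      Tendsto (fun t : ℝ => (f ((1 - t) • x + t • y) - f x) / t)
        (𝓝[>] 0) (𝓝 (D x y)))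
    (haff : ∀ x ∈ C, ∀ y ∈ C, ∀ z ∈ C, ∀ t ∈ Set.Icc (0:ℝ) 1,
      D x ((1 - t) • y + t • z) = (1 - t) * D x y + t * D x z) :
    (∀ x ∈ C, ∀ y ∈ C, ∀ t ∈ Set.Ioo (0:ℝ) 1,
        f (t • x + (1 - t) • y) ≤ max (f x) (f y)) ↔
      (∀ x ∈ C, ∀ y ∈ C, f y ≤ f x → D x y ≤ 0) :=
  stmt_12_general C hC f D hD
end

section
/- Danskin-type envelope theorem: let v(x) = sup_{s∈S} f(s,x) with σ(x) = argmax_s f(s,x) nonempty for all x ∈ C. Fix x, y ∈ C and set x_t = (1−t)x + ty. Assume (i) Df_s(x;y) exists for all s ∈ σ(x); (ii) for every sequence t_n ↓ 0 there exist s_n ∈ σ(x_{t_n}) with limsup_n (f(s_n, x_{t_n}) − f(s_n, x))/t_n ≤ sup_{s∈σ(x)} Df_s(x;y). Then the affine directional derivative Dv(x;y) = lim_{t→0⁺}(v(x_t) − v(x))/t exists and equals sup_{s∈σ(x)} Df_s(x;y). -/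
open Set Filter Topology

/-- Danskin–Demyanov type envelope theorem: under (i) existence of
`Df_s(x;y)` for maximizers `s ∈ σ(x)` and (ii) the limsup condition along sequences
`t_n ↓ 0` with `s_n ∈ σ(x_{t_n})`, the affine directional derivative `Dv(x;y)` exists
and equals `sup_{s ∈ σ(x)} Df_s(x;y)`. -/
theorem stmt_15 {X S : Type*} [AddCommGroup X] [Module ℝ X]
    (C : Set X) (hC : Convex ℝ C) (f : S → X → ℝ) (v : X → ℝ)
    (hub : ∀ z ∈ C, ∀ s : S, f s z ≤ v z)
    (hviable : ∀ z ∈ C, ∃ s : S, f s z = v z)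
    (x y : X) (hx : x ∈ C) (hy : y ∈ C)
    (Df : S → ℝ)
    (hi : ∀ s : S, f s x = v x →
      Tendsto (fun t : ℝ => (f s ((1 - t) • x + t • y) - f s x) / t)
        (𝓝[>] 0) (𝓝 (Df s)))
    (hii : ∀ t : ℕ → ℝ, (∀ n, 0 < t n ∧ t n ≤ 1) → Tendsto t atTop (𝓝 0) →
      ∃ s : ℕ → S,
        (∀ n, f (s n) ((1 - t n) • x + t n • y) = v ((1 - t n) • x + t n • y)) ∧
        ∀ ε > (0:ℝ), ∀ᶠ n in atTop,
          (f (s n) ((1 - t n) • x + t n • y) - f (s n) x) / t n ≤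
            sSup {d : ℝ | ∃ s₀ : S, f s₀ x = v x ∧ Df s₀ = d} + ε) :
    Tendsto (fun t : ℝ => (v ((1 - t) • x + t • y) - v x) / t)
      (𝓝[>] 0) (𝓝 (sSup {d : ℝ | ∃ s₀ : S, f s₀ x = v x ∧ Df s₀ = d})) := by
  set A : Set ℝ := {d : ℝ | ∃ s₀ : S, f s₀ x = v x ∧ Df s₀ = d} with hA
  set D : ℝ := sSup A with hD
  set g : ℝ → ℝ := fun t => (v ((1 - t) • x + t • y) - v x) / t with hg
  have hAne : A.Nonempty := by
    obtain ⟨s, hs⟩ := hviable x hx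
    exact ⟨Df s, s, hs, rfl⟩
  have hmemC : ∀ t : ℝ, 0 < t → t ≤ 1 → (1 - t) • x + t • y ∈ C := fun t ht ht1 =>
    hC hx hy (by linarith) ht.le (by ring)
  have hIoo : ∀ᶠ t : ℝ in 𝓝[>] 0, t ∈ Ioo (0:ℝ) 1 :=
    Ioo_mem_nhdsGT_of_mem ⟨le_refl 0, one_pos⟩
  -- lower bound: for each d ∈ A, eventually d - ε < g t
  have hlow : ∀ d ∈ A, ∀ ε : ℝ, 0 < ε → ∀ᶠ t in 𝓝[>] (0:ℝ), d - ε < g t := by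
    rintro d ⟨s, hs, rfl⟩ ε hε
    have h1 : ∀ᶠ t in 𝓝[>] (0:ℝ),
        Df s - ε < (f s ((1 - t) • x + t • y) - f s x) / t :=
      (hi s hs).eventually (eventually_gt_nhds (by linarith))
    filter_upwards [h1, hIoo] with t h1 ht
    have hzc : (1 - t) • x + t • y ∈ C := hmemC t ht.1 ht.2.le
    have hq : (f s ((1 - t) • x + t • y) - f s x) / t ≤ g t := by
      apply div_le_div_of_nonneg_right ?_ ht.1.le |>.trans_eq rfl
      have := hub _ hzc s
      linarith [hs]
    linarith
  -- upper bound: eventually g t ≤ D + ε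
  have hup : ∀ ε : ℝ, 0 < ε → ∀ᶠ t in 𝓝[>] (0:ℝ), g t ≤ D + ε := by
    intro ε hε
    by_contra hcon
    rw [Filter.not_eventually] at hcon
    have hfreq : ∃ᶠ t in 𝓝[>] (0:ℝ), t ∈ Ioo (0:ℝ) 1 ∧ ¬ g t ≤ D + ε :=
      (hcon.and_eventually hIoo).mono (fun t ht => ⟨ht.2, ht.1⟩)
    obtain ⟨tseq, htends, hp⟩ := Filter.exists_seq_forall_of_frequently hfreq
    have hpos : ∀ n, 0 < tseq n ∧ tseq n ≤ 1 := fun n => ⟨(hp n).1.1, (hp n).1.2.le⟩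
    obtain ⟨s, hsmax, hsbd⟩ := hii tseq hpos (htends.mono_right nhdsWithin_le_nhds)
    have := (hsbd ε hε).exists
    obtain ⟨n, hn⟩ := this
    have hqn : g (tseq n) ≤
        (f (s n) ((1 - tseq n) • x + tseq n • y) - f (s n) x) / tseq n := by
      apply div_le_div_of_nonneg_right ?_ (hpos n).1.le |>.trans_eq rfl
      have := hub x hx (s n)
      linarith [hsmax n]
    exact (hp n).2 (hqn.trans hn)
  -- every element of A is ≤ D
  have hA_le_D : ∀ d ∈ A, d ≤ D := by
    intro d hd
    refine le_of_forall_pos_le_add (fun ε hε => ?_)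
    have h2 : 0 < ε / 2 := by linarith
    obtain ⟨t, ht1, ht2⟩ := ((hlow d hd (ε/2) h2).and (hup (ε/2) h2)).exists
    linarith
  have hbdd : BddAbove A := ⟨D, hA_le_D⟩
  rw [Metric.tendsto_nhds]
  intro ε hε
  have h2 : 0 < ε / 2 := by linarith
  obtain ⟨d, hdA, hdlt⟩ := exists_lt_of_lt_csSup hAne (show D - ε/2 < sSup A by rw [← hD]; linarith)
  filter_upwards [hlow d hdA (ε/2) h2, hup (ε/2) h2] with t h1 h2'
  rw [Real.dist_eq, abs_lt]
  constructor <;> linarith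
end

section
/- Let ρ be a convex metric on a convex set C and let f : C → ℝ be wa-differentiable in a ρ-neighborhood of a point x̄ ∈ C. If the map x ↦ Df(x;y) is ρ-continuous at x̄ for every y ∈ C, then f is strictly wa-differentiable at x̄: for every y ∈ C, every sequence t_n ↓ 0, and every sequence x_n ∈ C with ρ(x_n, x̄) → 0, (f((1−t_n)x_n + t_n y) − f(x_n))/t_n → Df(x̄; y). -/
/-!
Fix `y` and one pair `(xₙ, tₙ)`, let `g b = (1 - b) xₙ + b y` and `φ = f ∘ g`. A radial derivative
of `f` at `g b` is a one-sided derivative of `φ` at `b`: towards `y` it gives the right derivative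
`Df(g b; y)/(1 - b)`, towards `xₙ` a left derivative, so `φ` is continuous. By convexity of `ρ`
the points `g b`, `b ≤ tₙ`, are `ρ`-close to `x̄` once `xₙ` is, so by continuity of `Df(·; y)` the
right derivative of `φ` stays close to `Df(x̄; y)` on `[0, tₙ]`, and the mean value inequality for
right derivatives puts the difference quotient `(φ tₙ - φ 0)/tₙ` close to `Df(x̄; y)` as well.
-/

open Set Filter Topology

/-- The paper's `Df(z; y)` exists and equals `d`. -/
def HasRadialDeriv {X : Type*} [AddCommGroup X] [Module ℝ X] (f : X → ℝ) (z y : X) (d : ℝ) :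
    Prop :=
  Tendsto (fun t : ℝ => (f ((1 - t) • z + t • y) - f z) / t) (𝓝[>] 0) (𝓝 d)

theorem continuousOn_Icc_of_continuousWithinAt_Ici_Iic {φ : ℝ → ℝ} {a b : ℝ}
    (hright : ∀ s ∈ Icc a b, ContinuousWithinAt φ (Ici s) s)
    (hleft : ∀ s ∈ Ioc a b, ContinuousWithinAt φ (Iic s) s) :
    ContinuousOn φ (Icc a b) := by
  intro s hs
  rcases hs.1.eq_or_lt with rfl | has
  · exact (hright _ hs).mono Icc_subset_Ici_self
  · exact (continuousAt_iff_continuous_left_right.2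
      ⟨hleft s ⟨has, hs.2⟩, hright s hs⟩).continuousWithinAt

theorem abs_slope_sub_le_of_hasDerivWithinAt_Ici {φ φ' : ℝ → ℝ} {a b c η : ℝ} (hab : a < b)
    (hφ : ContinuousOn φ (Icc a b))
    (hderiv : ∀ s ∈ Ico a b, HasDerivWithinAt φ (φ' s) (Ici s) s)
    (hbound : ∀ s ∈ Ico a b, |φ' s - c| ≤ η) :
    |slope φ a b - c| ≤ η := by
  have hmv := norm_image_sub_le_of_norm_deriv_right_le_segment
    (f := fun s => φ s - s * c) (hφ.sub (continuousOn_id.mul continuousOn_const))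
    (fun s hs => ((hderiv s hs).sub ((hasDerivWithinAt_id s _).mul_const c)).congr_deriv
      (by simp)) hbound b (right_mem_Icc.2 hab.le)
  have hba : 0 < b - a := sub_pos.2 hab
  rw [Real.norm_eq_abs, show φ b - b * c - (φ a - a * c) = (slope φ a b - c) * (b - a) by
    rw [slope_def_field]; field_simp; ring, abs_mul, abs_of_pos hba] at hmv
  exact le_of_mul_le_mul_right hmv hba

theorem abs_div_one_sub_sub_le {d c s : ℝ} (hs0 : 0 ≤ s) (hs : s ≤ 1 / 2) :
    |d / (1 - s) - c| ≤ 2 * (|d - c| + |c| * s) := by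
  have h1s : 0 < 1 - s := by linarith
  rw [show d / (1 - s) - c = (d - c + c * s) / (1 - s) by field_simp; ring, abs_div,
    abs_of_pos h1s, div_le_iff₀ h1s]
  have : |d - c + c * s| ≤ |d - c| + |c| * s := by
    simpa [abs_mul, abs_of_nonneg hs0] using abs_add_le (d - c) (c * s)
  nlinarith [mul_nonneg (add_nonneg (abs_nonneg (d - c)) (mul_nonneg (abs_nonneg c) hs0))
    (show 0 ≤ 1 - 2 * s by linarith)]

theorem exists_forall_abs_sub_le_of_seq {α : Type*} {C : Set α} {r F : α → ℝ} {L η : ℝ}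
    (hr : ∀ z ∈ C, 0 ≤ r z)
    (hseq : ∀ z : ℕ → α, (∀ n, z n ∈ C) → Tendsto (fun n => r (z n)) atTop (𝓝 0) →
      Tendsto (fun n => F (z n)) atTop (𝓝 L))
    (hη : 0 < η) :
    ∃ δ > 0, ∀ z ∈ C, r z ≤ δ → |F z - L| ≤ η := by
  by_contra! hne
  choose z hzC hzr hzF using fun n : ℕ => hne (1 / (n + 1)) Nat.one_div_pos_of_nat
  have hz : Tendsto (fun n => r (z n)) atTop (𝓝 0) :=
    squeeze_zero (fun n => hr _ (hzC n)) hzr tendsto_one_div_add_atTop_nhds_zero_nat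
  obtain ⟨n, hn⟩ := ((hseq z hzC hz).eventually (Metric.closedBall_mem_nhds L hη)).exists
  exact (hzF n).not_ge hn

section Segments

variable {X : Type*} [AddCommGroup X] [Module ℝ X] {f : X → ℝ}

theorem HasRadialDeriv.hasDerivWithinAt {z y : X} {d : ℝ} (h : HasRadialDeriv f z y d) :
    HasDerivWithinAt (fun τ : ℝ => f ((1 - τ) • z + τ • y)) d (Ici 0) 0 := by
  rw [hasDerivWithinAt_iff_tendsto_slope, Ici_sdiff_left]
  refine h.congr fun τ => ?_
  simp [slope_def_field]

theorem HasRadialDeriv.hasDerivWithinAt_segment {x y : X} {s a d : ℝ} {S : Set ℝ}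
    (h : HasRadialDeriv f ((1 - s) • x + s • y) ((1 - a) • x + a • y) d) (hsa : a ≠ s)
    (hS : MapsTo (fun b => (b - s) / (a - s)) S (Ici 0)) :
    HasDerivWithinAt (fun b => f ((1 - b) • x + b • y)) (d / (a - s)) S s := by
  have has : a - s ≠ 0 := sub_ne_zero.2 hsa
  have hreparam : ∀ b : ℝ, (1 - (b - s) / (a - s)) • ((1 - s) • x + s • y) +
      ((b - s) / (a - s)) • ((1 - a) • x + a • y) = (1 - b) • x + b • y := by
    intro b
    have hτ : (b - s) / (a - s) * (a - s) = b - s := div_mul_cancel₀ _ has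
    match_scalars
    · linear_combination -hτ
    · linear_combination hτ
  have hlin : HasDerivWithinAt (fun b => (b - s) / (a - s)) (1 / (a - s)) S s :=
    ((hasDerivAt_id s).sub_const s).div_const (a - s) |>.hasDerivWithinAt
  have hcomp : (fun b => f ((1 - b) • x + b • y)) =
      (fun τ => f ((1 - τ) • ((1 - s) • x + s • y) + τ • ((1 - a) • x + a • y))) ∘
        (fun b => (b - s) / (a - s)) :=
    funext fun b => by simp only [Function.comp_apply, hreparam]
  rw [hcomp, div_eq_mul_one_div d]
  exact h.hasDerivWithinAt.comp_of_eq s hlin hS (by simp)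

theorem HasRadialDeriv.hasDerivWithinAt_segment_Ici {x y : X} {s d : ℝ} (hs : s < 1)
    (h : HasRadialDeriv f ((1 - s) • x + s • y) y d) :
    HasDerivWithinAt (fun b => f ((1 - b) • x + b • y)) (d / (1 - s)) (Ici s) s :=
  HasRadialDeriv.hasDerivWithinAt_segment (a := 1) (by simpa using h) hs.ne'
    fun _ hb => div_nonneg (sub_nonneg.2 hb) (sub_pos.2 hs).le

theorem HasRadialDeriv.hasDerivWithinAt_segment_Iic {x y : X} {s d : ℝ} (hs : 0 < s)
    (h : HasRadialDeriv f ((1 - s) • x + s • y) x d) :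
    HasDerivWithinAt (fun b => f ((1 - b) • x + b • y)) (d / (0 - s)) (Iic s) s :=
  HasRadialDeriv.hasDerivWithinAt_segment (a := 0) (by simpa using h) hs.ne
    fun _ hb => div_nonneg_of_nonpos (sub_nonpos.2 hb) (sub_nonpos.2 hs.le)

theorem abs_radial_quotient_sub_le {x y : X} {d : ℝ → ℝ} {c η T : ℝ} (hT0 : 0 < T)
    (hT : T ≤ 1 / 2)
    (htoward_y : ∀ s ∈ Icc 0 T, HasRadialDeriv f ((1 - s) • x + s • y) y (d s))
    (htoward_x : ∀ s ∈ Ioc 0 T, ∃ e, HasRadialDeriv f ((1 - s) • x + s • y) x e)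
    (hd : ∀ s ∈ Icc 0 T, |d s - c| ≤ η) (hc : |c| * T ≤ η) :
    |(f ((1 - T) • x + T • y) - f x) / T - c| ≤ 4 * η := by
  have hright : ∀ s ∈ Icc 0 T, HasDerivWithinAt (fun b => f ((1 - b) • x + b • y))
      (d s / (1 - s)) (Ici s) s := fun s hs =>
    (htoward_y s hs).hasDerivWithinAt_segment_Ici (by linarith [hs.2])
  have hcont : ContinuousOn (fun b => f ((1 - b) • x + b • y)) (Icc 0 T) := by
    refine continuousOn_Icc_of_continuousWithinAt_Ici_Iic
      (fun s hs => (hright s hs).continuousWithinAt) fun s hs => ?_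
    obtain ⟨e, he⟩ := htoward_x s hs
    exact (he.hasDerivWithinAt_segment_Iic hs.1).continuousWithinAt
  have hbound : ∀ s ∈ Ico 0 T, |d s / (1 - s) - c| ≤ 4 * η := fun s hs => by
    have hcs : |c| * s ≤ η := le_trans (mul_le_mul_of_nonneg_left hs.2.le (abs_nonneg c)) hc
    linarith [abs_div_one_sub_sub_le (d := d s) (c := c) hs.1 (by linarith [hs.2]),
      hd s (Ico_subset_Icc_self hs)]
  have := abs_slope_sub_le_of_hasDerivWithinAt_Ici hT0 hcont
    (fun s hs => hright s (Ico_subset_Icc_self hs)) hbound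
  simpa [slope_def_field] using this

end Segments

theorem rho_nonneg {X : Type*} {C : Set X} {ρ : X → X → ℝ} (hρ0 : ∀ x ∈ C, ρ x x = 0)
    (hρsymm : ∀ x ∈ C, ∀ y ∈ C, ρ x y = ρ y x)
    (hρtri : ∀ x ∈ C, ∀ y ∈ C, ∀ z ∈ C, ρ x z ≤ ρ x y + ρ y z) {x y : X} (hx : x ∈ C)
    (hy : y ∈ C) : 0 ≤ ρ x y := by
  have := hρtri x hx y hy x hx
  rw [hρ0 x hx, hρsymm y hy x hx] at this
  linarith

theorem rho_segment_le {X : Type*} [AddCommGroup X] [Module ℝ X] {C : Set X} {ρ : X → X → ℝ}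
    (hC : Convex ℝ C) (hρsymm : ∀ x ∈ C, ∀ y ∈ C, ρ x y = ρ y x)
    (hρconv : ∀ x ∈ C, ∀ y₁ ∈ C, ∀ y₂ ∈ C, ∀ α ∈ Set.Icc (0:ℝ) 1,
      ρ x (α • y₁ + (1 - α) • y₂) ≤ α * ρ x y₁ + (1 - α) * ρ x y₂)
    {x y z : X} (hx : x ∈ C) (hy : y ∈ C) (hz : z ∈ C) (hxz : 0 ≤ ρ x z) {s : ℝ}
    (hs : s ∈ Icc (0 : ℝ) 1) :
    ρ ((1 - s) • x + s • y) z ≤ ρ x z + s * ρ z y := by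
  have hconv := hρconv z hz x hx y hy (1 - s) ⟨by linarith [hs.2], by linarith [hs.1]⟩
  rw [sub_sub_cancel, hρsymm z hz x hx] at hconv
  rw [hρsymm _ (hC hx hy (by linarith [hs.2]) hs.1 (by ring)) z hz]
  nlinarith [hs.1]

theorem stmt_17_general {X : Type*} [AddCommGroup X] [Module ℝ X]
    (C : Set X) (hC : Convex ℝ C) (ρ : X → X → ℝ)
    (hρ0 : ∀ x ∈ C, ρ x x = 0)
    (hρsymm : ∀ x ∈ C, ∀ y ∈ C, ρ x y = ρ y x)
    (hρtri : ∀ x ∈ C, ∀ y ∈ C, ∀ z ∈ C, ρ x z ≤ ρ x y + ρ y z)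
    (hρconv : ∀ x ∈ C, ∀ y₁ ∈ C, ∀ y₂ ∈ C, ∀ α ∈ Set.Icc (0:ℝ) 1,
      ρ x (α • y₁ + (1 - α) • y₂) ≤ α * ρ x y₁ + (1 - α) * ρ x y₂)
    (f : X → ℝ) (D : X → X → ℝ) (xbar : X) (hxbar : xbar ∈ C)
    (ε : ℝ) (hε : 0 < ε)
    -- `f` is wa-differentiable on a `ρ`-neighborhood of `x̄`:
    (hwa : ∀ z ∈ C, ρ z xbar ≤ ε →
      (∀ y ∈ C,
        Tendsto (fun t : ℝ => (f ((1 - t) • z + t • y) - f z) / t)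
          (𝓝[>] 0) (𝓝 (D z y))) ∧
      (∀ y ∈ C, ∀ w ∈ C, ∀ t ∈ Set.Icc (0:ℝ) 1,
        D z ((1 - t) • y + t • w) = (1 - t) * D z y + t * D z w))
    -- `x ↦ Df(x;y)` is `ρ`-continuous at `x̄` for every `y ∈ C`:
    (hcont : ∀ y ∈ C, ∀ z : ℕ → X, (∀ n, z n ∈ C) →
      Tendsto (fun n => ρ (z n) xbar) atTop (𝓝 0) →
      Tendsto (fun n => D (z n) y) atTop (𝓝 (D xbar y))) :
    -- strict wa-differentiability at `x̄`:
    ∀ y ∈ C, ∀ t : ℕ → ℝ, ∀ x : ℕ → X,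
      (∀ n, 0 < t n ∧ t n ≤ 1) → Tendsto t atTop (𝓝 0) →
      (∀ n, x n ∈ C) → Tendsto (fun n => ρ (x n) xbar) atTop (𝓝 0) →
      Tendsto (fun n => (f ((1 - t n) • x n + t n • y) - f (x n)) / t n)
        atTop (𝓝 (D xbar y)) := by
  intro y hy t x ht htt hxC hxρ
  have hρnn {u v : X} (hu : u ∈ C) (hv : v ∈ C) : 0 ≤ ρ u v := rho_nonneg hρ0 hρsymm hρtri hu hv
  rw [Metric.tendsto_atTop]
  intro η hη
  obtain ⟨δ, hδ, hDδ⟩ := exists_forall_abs_sub_le_of_seq (F := (D · y))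
    (fun z hz => hρnn hz hxbar) (hcont y hy) (show 0 < η / 8 by positivity)
  set r := min δ ε
  have hr : 0 < r := lt_min hδ hε
  have ht_mul (a : ℝ) : Tendsto (fun n => a * t n) atTop (𝓝 0) := by simpa using htt.const_mul a
  have hsmall : ∀ᶠ n in atTop, ρ (x n) xbar < r / 2 ∧ t n ≤ 1 / 2 ∧
      ρ xbar y * t n < r / 2 ∧ |D xbar y| * t n ≤ η / 8 :=
    (hxρ.eventually (gt_mem_nhds (half_pos hr))).and <|
      (htt.eventually (ge_mem_nhds (by norm_num))).and <|
      ((ht_mul _).eventually (gt_mem_nhds (half_pos hr))).and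
      ((ht_mul _).eventually (ge_mem_nhds (by positivity)))
  obtain ⟨N, hN⟩ := hsmall.exists_forall_of_atTop
  refine ⟨N, fun n hn => ?_⟩
  obtain ⟨hxn, ht2, htρ, htD⟩ := hN n hn
  have hnear : ∀ s ∈ Icc 0 (t n),
      (1 - s) • x n + s • y ∈ C ∧ ρ ((1 - s) • x n + s • y) xbar ≤ r := fun s hs => by
    have hs1 : s ∈ Icc (0 : ℝ) 1 := ⟨hs.1, by linarith [hs.2]⟩
    refine ⟨hC (hxC n) hy (by linarith [hs1.2]) hs1.1 (by ring), ?_⟩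
    have := rho_segment_le hC hρsymm hρconv (hxC n) hy hxbar (hρnn (hxC n) hxbar) hs1
    nlinarith [hρnn hxbar hy, hs.2]
  have hwa_near {s} (hs : s ∈ Icc 0 (t n)) :=
    hwa _ (hnear s hs).1 ((hnear s hs).2.trans (min_le_right _ _))
  have hquot := abs_radial_quotient_sub_le (ht n).1 ht2 (fun s hs => (hwa_near hs).1 y hy)
    (fun s hs => ⟨_, (hwa_near (Ioc_subset_Icc_self hs)).1 (x n) (hxC n)⟩)
    (fun s hs => hDδ _ (hnear s hs).1 ((hnear s hs).2.trans (min_le_left _ _))) htD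
  rw [Real.dist_eq]
  linarith

/-- if `ρ` is a convex metric on `C`, `f` is wa-differentiable in a
`ρ`-neighborhood of `x̄ ∈ C`, and `x ↦ Df(x;y)` is `ρ`-continuous at `x̄` for every
`y ∈ C`, then `f` is strictly wa-differentiable at `x̄`. -/
theorem stmt_17 {X : Type*} [AddCommGroup X] [Module ℝ X]
    (C : Set X) (hC : Convex ℝ C) (ρ : X → X → ℝ)
    (hρ0 : ∀ x ∈ C, ρ x x = 0)
    (hρeq : ∀ x ∈ C, ∀ y ∈ C, ρ x y = 0 → x = y)
    (hρsymm : ∀ x ∈ C, ∀ y ∈ C, ρ x y = ρ y x)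
    (hρtri : ∀ x ∈ C, ∀ y ∈ C, ∀ z ∈ C, ρ x z ≤ ρ x y + ρ y z)
    (hρconv : ∀ x ∈ C, ∀ y₁ ∈ C, ∀ y₂ ∈ C, ∀ α ∈ Set.Icc (0:ℝ) 1,
      ρ x (α • y₁ + (1 - α) • y₂) ≤ α * ρ x y₁ + (1 - α) * ρ x y₂)
    (f : X → ℝ) (D : X → X → ℝ) (xbar : X) (hxbar : xbar ∈ C)
    (ε : ℝ) (hε : 0 < ε)
    -- `f` is wa-differentiable on a `ρ`-neighborhood of `x̄`:
    (hwa : ∀ z ∈ C, ρ z xbar ≤ ε →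
      (∀ y ∈ C,
        Tendsto (fun t : ℝ => (f ((1 - t) • z + t • y) - f z) / t)
          (𝓝[>] 0) (𝓝 (D z y))) ∧
      (∀ y ∈ C, ∀ w ∈ C, ∀ t ∈ Set.Icc (0:ℝ) 1,
        D z ((1 - t) • y + t • w) = (1 - t) * D z y + t * D z w))
    -- `x ↦ Df(x;y)` is `ρ`-continuous at `x̄` for every `y ∈ C`:
    (hcont : ∀ y ∈ C, ∀ z : ℕ → X, (∀ n, z n ∈ C) →
      Tendsto (fun n => ρ (z n) xbar) atTop (𝓝 0) →
      Tendsto (fun n => D (z n) y) atTop (𝓝 (D xbar y))) :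
    -- strict wa-differentiability at `x̄`:
    ∀ y ∈ C, ∀ t : ℕ → ℝ, ∀ x : ℕ → X,
      (∀ n, 0 < t n ∧ t n ≤ 1) → Tendsto t atTop (𝓝 0) →
      (∀ n, x n ∈ C) → Tendsto (fun n => ρ (x n) xbar) atTop (𝓝 0) →
      Tendsto (fun n => (f ((1 - t n) • x n + t n • y) - f (x n)) / t n)
        atTop (𝓝 (D xbar y)) :=
  stmt_17_general C hC ρ hρ0 hρsymm hρtri hρconv f D xbar hxbar ε hε hwa hcont
end

section
/- Let ρ be a convex metric on a convex set C. If f : C → ℝ is Frechet wa-differentiable at x ∈ C with differential A (a ρ-continuous affine functional with A(x) = 0 such that (f(x_n) − f(x) − A(x_n))/ρ(x_n,x) → 0 whenever ρ(x_n,x) → 0), then f is boundedly wa-differentiable at x: for every sequence t_n ↓ 0 and every ρ-bounded sequence y_n in C, (f((1−t_n)x + t_n y_n) − f(x))/t_n − A(y_n) → 0. -/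
open Set Filter Topology Asymptotics

/-!
Put `xₙ = (1 - tₙ) x + tₙ yₙ`. Convexity of `ρ` gives `ρ(xₙ, x) ≤ tₙ ρ(yₙ, x) ≤ tₙ M`, so
`xₙ → x` and `ρ(xₙ, x) = O(tₙ)`. Affinity of `A` with `A x = 0` gives `A xₙ = tₙ A yₙ`, so the
quantity in question is `(f xₙ - f x - A xₙ) / tₙ`. Its numerator is `o(ρ(xₙ, x))` by Fréchet
differentiability, hence `o(tₙ)`.
-/

section ConvexMetric

variable {X : Type*} {C : Set X} {ρ : X → X → ℝ}

lemma nonneg_of_triangle (hρ0 : ∀ x ∈ C, ρ x x = 0)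
    (hρsymm : ∀ x ∈ C, ∀ y ∈ C, ρ x y = ρ y x)
    (hρtri : ∀ x ∈ C, ∀ y ∈ C, ∀ z ∈ C, ρ x z ≤ ρ x y + ρ y z)
    {x y : X} (hx : x ∈ C) (hy : y ∈ C) : 0 ≤ ρ x y := by
  linarith [hρtri x hx y hy x hx, hρ0 x hx, hρsymm x hx y hy]

lemma dist_lineMap_le [AddCommGroup X] [Module ℝ X] (hρ0 : ∀ x ∈ C, ρ x x = 0)
    (hρconv : ∀ x ∈ C, ∀ y₁ ∈ C, ∀ y₂ ∈ C, ∀ α ∈ Icc (0:ℝ) 1,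
      ρ x (α • y₁ + (1 - α) • y₂) ≤ α * ρ x y₁ + (1 - α) * ρ x y₂)
    {x y : X} (hx : x ∈ C) (hy : y ∈ C) {t : ℝ} (ht : t ∈ Icc (0:ℝ) 1) :
    ρ x ((1 - t) • x + t • y) ≤ t * ρ x y := by
  have h := hρconv x hx y hy x hx t ht
  rwa [add_comm, hρ0 x hx, mul_zero, add_zero] at h

end ConvexMetric

lemma Asymptotics.IsLittleO.tendsto_div_of_abs_le {α : Type*} {l : Filter α} {r d t : α → ℝ}
    {M : ℝ} (hr : r =o[l] d) (hd : ∀ a, |d a| ≤ M * |t a|) :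
    Tendsto (fun a => r a / t a) l (𝓝 0) :=
  (hr.trans_isBigO (isBigO_of_le' l hd)).tendsto_div_nhds_zero

theorem stmt_19_general {X : Type*} [AddCommGroup X] [Module ℝ X]
    (C : Set X) (hC : Convex ℝ C) (ρ : X → X → ℝ)
    (hρ0 : ∀ x ∈ C, ρ x x = 0)
    (hρeq : ∀ x ∈ C, ∀ y ∈ C, ρ x y = 0 → x = y)
    (hρsymm : ∀ x ∈ C, ∀ y ∈ C, ρ x y = ρ y x)
    (hρtri : ∀ x ∈ C, ∀ y ∈ C, ∀ z ∈ C, ρ x z ≤ ρ x y + ρ y z)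
    (hρconv : ∀ x ∈ C, ∀ y₁ ∈ C, ∀ y₂ ∈ C, ∀ α ∈ Set.Icc (0:ℝ) 1,
      ρ x (α • y₁ + (1 - α) • y₂) ≤ α * ρ x y₁ + (1 - α) * ρ x y₂)
    (f : X → ℝ) (x : X) (hx : x ∈ C) (A : X → ℝ)
    -- `A` is affine on `C`:
    (hAaff : ∀ y ∈ C, ∀ z ∈ C, ∀ t ∈ Set.Icc (0:ℝ) 1,
      A ((1 - t) • y + t • z) = (1 - t) * A y + t * A z)
    (hAx : A x = 0)
    -- `f` is Frechet wa-differentiable at `x` with differential `A`: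
    (hF : ∀ xn : ℕ → X, (∀ n, xn n ∈ C) →
      Tendsto (fun n => ρ (xn n) x) atTop (𝓝 0) →
      Tendsto (fun n => (f (xn n) - f x - A (xn n)) / ρ (xn n) x) atTop (𝓝 0)) :
    -- `f` is boundedly wa-differentiable at `x`:
    ∀ t : ℕ → ℝ, ∀ yn : ℕ → X,
      (∀ n, 0 < t n ∧ t n ≤ 1) → Tendsto t atTop (𝓝 0) →
      (∀ n, yn n ∈ C) → (∃ M : ℝ, ∀ n, ρ (yn n) x ≤ M) →
      Tendsto (fun n => (f ((1 - t n) • x + t n • yn n) - f x) / t n - A (yn n))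
        atTop (𝓝 0) := by
  intro t yn ht htend hyn ⟨M, hM⟩
  have htI : ∀ n, t n ∈ Icc (0:ℝ) 1 := fun n => ⟨(ht n).1.le, (ht n).2⟩
  set xn : ℕ → X := fun n => (1 - t n) • x + t n • yn n
  have hxn : ∀ n, xn n ∈ C := fun n =>
    hC hx (hyn n) (sub_nonneg.2 (ht n).2) (ht n).1.le (sub_add_cancel 1 (t n))
  have hd0 : ∀ n, 0 ≤ ρ (xn n) x := fun n => nonneg_of_triangle hρ0 hρsymm hρtri (hxn n) hx
  have hdt : ∀ n, ρ (xn n) x ≤ M * t n := fun n => calc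
    ρ (xn n) x = ρ x (xn n) := hρsymm _ (hxn n) _ hx
    _ ≤ t n * ρ x (yn n) := dist_lineMap_le hρ0 hρconv hx (hyn n) (htI n)
    _ ≤ M * t n := by
      rw [hρsymm x hx _ (hyn n), mul_comm]; exact mul_le_mul_of_nonneg_right (hM n) (htI n).1
  have hd : Tendsto (fun n => ρ (xn n) x) atTop (𝓝 0) :=
    squeeze_zero hd0 hdt (by simpa using htend.const_mul M)
  have hrem : (fun n => f (xn n) - f x - A (xn n)) =o[atTop] fun n => ρ (xn n) x := by
    refine (isLittleO_iff_tendsto' (Eventually.of_forall fun n h => ?_)).2 (hF xn hxn hd)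
    rw [hρeq _ (hxn n) _ hx h, hAx, sub_self, sub_zero]
  have hA : ∀ n, A (xn n) = t n * A (yn n) := fun n => by
    rw [hAaff x hx (yn n) (hyn n) (t n) (htI n), hAx, mul_zero, zero_add]
  have hdO : ∀ n, |ρ (xn n) x| ≤ M * |t n| := fun n => by
    rw [abs_of_nonneg (hd0 n), abs_of_pos (ht n).1]; exact hdt n
  refine (hrem.tendsto_div_of_abs_le hdO).congr fun n => ?_
  rw [hA, sub_div, mul_div_cancel_left₀ _ (ht n).1.ne']

/-- if `ρ` is a convex metric on `C` and `f` is Frechet wa-differentiable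
at `x ∈ C` with differential `A` (a `ρ`-continuous affine functional with `A(x) = 0`),
then `f` is boundedly wa-differentiable at `x`. -/
theorem stmt_19 {X : Type*} [AddCommGroup X] [Module ℝ X]
    (C : Set X) (hC : Convex ℝ C) (ρ : X → X → ℝ)
    (hρ0 : ∀ x ∈ C, ρ x x = 0)
    (hρeq : ∀ x ∈ C, ∀ y ∈ C, ρ x y = 0 → x = y)
    (hρsymm : ∀ x ∈ C, ∀ y ∈ C, ρ x y = ρ y x)
    (hρtri : ∀ x ∈ C, ∀ y ∈ C, ∀ z ∈ C, ρ x z ≤ ρ x y + ρ y z)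
    (hρconv : ∀ x ∈ C, ∀ y₁ ∈ C, ∀ y₂ ∈ C, ∀ α ∈ Set.Icc (0:ℝ) 1,
      ρ x (α • y₁ + (1 - α) • y₂) ≤ α * ρ x y₁ + (1 - α) * ρ x y₂)
    (f : X → ℝ) (x : X) (hx : x ∈ C) (A : X → ℝ)
    -- `A` is affine on `C`:
    (hAaff : ∀ y ∈ C, ∀ z ∈ C, ∀ t ∈ Set.Icc (0:ℝ) 1,
      A ((1 - t) • y + t • z) = (1 - t) * A y + t * A z)
    -- `A` is `ρ`-continuous on `C`:
    (hAcont : ∀ z ∈ C, ∀ zn : ℕ → X, (∀ n, zn n ∈ C) →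
      Tendsto (fun n => ρ (zn n) z) atTop (𝓝 0) →
      Tendsto (fun n => A (zn n)) atTop (𝓝 (A z)))
    (hAx : A x = 0)
    -- `f` is Frechet wa-differentiable at `x` with differential `A`:
    (hF : ∀ xn : ℕ → X, (∀ n, xn n ∈ C) →
      Tendsto (fun n => ρ (xn n) x) atTop (𝓝 0) →
      Tendsto (fun n => (f (xn n) - f x - A (xn n)) / ρ (xn n) x) atTop (𝓝 0)) :
    -- `f` is boundedly wa-differentiable at `x`:
    ∀ t : ℕ → ℝ, ∀ yn : ℕ → X,
      (∀ n, 0 < t n ∧ t n ≤ 1) → Tendsto t atTop (𝓝 0) →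
      (∀ n, yn n ∈ C) → (∃ M : ℝ, ∀ n, ρ (yn n) x ≤ M) →
      Tendsto (fun n => (f ((1 - t n) • x + t n • yn n) - f x) / t n - A (yn n))
        atTop (𝓝 0) :=
  stmt_19_general C hC ρ hρ0 hρeq hρsymm hρtri hρconv f x hx A hAaff hAx hF
end
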